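/- arXiv:2307.06499 — 8 statements merged into one kernel-verified Lean document; each statement's English description precedes it below -/
import Mathlib

section
/- Let a ≥ 1 be a real number. Then, using the principal branch of the complex square root, the function ε ↦ (1-((a:ℂ)+iε)²)^(1/2) tends to -i·√(a²-1) as ε → 0 from above (along the filter 𝓝[>]0), and the function ε ↦ (1-((a:ℂ)-iε)²)^(1/2) tends to +i·√(a²-1) as ε → 0 from above. Here √(a²-1) denotes the nonnegative real square root. -/
/-!
For `ε > 0` the point `w = 1 - (a ± iε)²` lies strictly in the lower (resp. upper) half-plane
and tends to the point `1 - a² ≤ 0` of the branch cut. Off the real axis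
`log (-w) = log w ± πi`, so `w^(1/2) = ∓i (-w)^(1/2)`, and `(-w)^(1/2)` is continuous at the
nonnegative real `a² - 1`.
-/

open Complex Filter

namespace Complex

lemma log_neg_of_im_neg {w : ℂ} (hw : w.im < 0) : log (-w) = log w + Real.pi * I := by
  apply Complex.ext <;> simp [log_re, log_im, arg_neg_eq_arg_add_pi_of_im_neg hw]

lemma neg_cpow_half_of_im_neg {w : ℂ} (hw : w.im < 0) :
    (-w) ^ ((1 : ℂ) / 2) = I * w ^ ((1 : ℂ) / 2) := by
  have hw0 : w ≠ 0 := fun h => by simp [h] at hw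
  rw [cpow_def_of_ne_zero (neg_ne_zero.2 hw0), cpow_def_of_ne_zero hw0, log_neg_of_im_neg hw,
    add_mul, exp_add, mul_comm I, show (Real.pi : ℂ) * I * (1 / 2) = Real.pi / 2 * I by ring,
    exp_pi_div_two_mul_I]

lemma cpow_half_of_im_neg {w : ℂ} (hw : w.im < 0) :
    w ^ ((1 : ℂ) / 2) = -I * (-w) ^ ((1 : ℂ) / 2) := by
  rw [neg_cpow_half_of_im_neg hw, ← mul_assoc, neg_mul, I_mul_I, neg_neg, one_mul]

lemma cpow_half_of_im_pos {w : ℂ} (hw : 0 < w.im) :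
    w ^ ((1 : ℂ) / 2) = I * (-w) ^ ((1 : ℂ) / 2) := by
  simpa using neg_cpow_half_of_im_neg (w := -w) (by simpa using hw)

variable {α : Type*} {l : Filter α} {f : α → ℂ} {c : ℝ}

lemma tendsto_cpow_half_ofReal (hc : 0 ≤ c) (hf : Tendsto f l (nhds (c : ℂ))) :
    Tendsto (fun x => f x ^ ((1 : ℂ) / 2)) l (nhds (Real.sqrt c : ℂ)) := by
  have hsqrt : (c : ℂ) ^ ((1 : ℂ) / 2) = (Real.sqrt c : ℂ) := by
    rw [Real.sqrt_eq_rpow, ofReal_cpow hc]; norm_num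
  rw [← hsqrt]
  have hcont : ContinuousAt (fun z : ℂ => z ^ ((1 : ℂ) / 2)) c :=
    continuousAt_cpow_const_of_re_pos (Or.inl (by simpa using hc)) (by norm_num)
  exact hcont.tendsto.comp hf

lemma tendsto_cpow_half_of_im_neg (hc : 0 ≤ c) (hf : Tendsto (fun x => -f x) l (nhds (c : ℂ)))
    (him : ∀ᶠ x in l, (f x).im < 0) :
    Tendsto (fun x => f x ^ ((1 : ℂ) / 2)) l (nhds (-I * Real.sqrt c)) :=
  ((tendsto_cpow_half_ofReal hc hf).const_mul (-I)).congr'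
    (him.mono fun _ hx => (cpow_half_of_im_neg hx).symm)

lemma tendsto_cpow_half_of_im_pos (hc : 0 ≤ c) (hf : Tendsto (fun x => -f x) l (nhds (c : ℂ)))
    (him : ∀ᶠ x in l, 0 < (f x).im) :
    Tendsto (fun x => f x ^ ((1 : ℂ) / 2)) l (nhds (I * Real.sqrt c)) :=
  ((tendsto_cpow_half_ofReal hc hf).const_mul I).congr'
    (him.mono fun _ hx => (cpow_half_of_im_pos hx).symm)

end Complex

lemma tendsto_neg_one_sub_sq_nhdsGT {z : ℝ → ℂ} {a : ℝ} (hz : Continuous z)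
    (hz0 : z 0 = a) :
    Tendsto (fun ε => -(1 - z ε ^ 2)) (nhdsWithin 0 (Set.Ioi 0))
      (nhds ((a ^ 2 - 1 : ℝ) : ℂ)) := by
  have h := (hz.tendsto 0).mono_left (nhdsWithin_le_nhds (s := Set.Ioi 0))
  convert (h.pow 2).sub_const 1 using 2
  · ring
  · rw [hz0]; push_cast; ring

theorem stmt1 (a : ℝ) (ha : 1 ≤ a) :
    Tendsto (fun ε : ℝ => (1 - ((a : ℂ) + Complex.I * ε) ^ 2) ^ ((1 : ℂ) / 2))
      (nhdsWithin 0 (Set.Ioi 0))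
      (nhds (-Complex.I * Real.sqrt (a ^ 2 - 1))) ∧
    Tendsto (fun ε : ℝ => (1 - ((a : ℂ) - Complex.I * ε) ^ 2) ^ ((1 : ℂ) / 2))
      (nhdsWithin 0 (Set.Ioi 0))
      (nhds (Complex.I * Real.sqrt (a ^ 2 - 1))) := by
  have hc : 0 ≤ a ^ 2 - 1 := by nlinarith
  have ha0 : 0 < a := by linarith
  have hpos : ∀ᶠ ε : ℝ in nhdsWithin 0 (Set.Ioi 0), 0 < ε := self_mem_nhdsWithin
  constructor
  · refine tendsto_cpow_half_of_im_neg hc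
      (tendsto_neg_one_sub_sq_nhdsGT (by fun_prop) (by simp)) ?_
    filter_upwards [hpos] with ε hε
    have him : (1 - ((a : ℂ) + I * ε) ^ 2).im = -(2 * a * ε) := by simp [sq]; ring
    rw [him]
    exact neg_lt_zero.2 (by positivity)
  · refine tendsto_cpow_half_of_im_pos hc
      (tendsto_neg_one_sub_sq_nhdsGT (by fun_prop) (by simp)) ?_
    filter_upwards [hpos] with ε hε
    have him : (1 - ((a : ℂ) - I * ε) ^ 2).im = 2 * a * ε := by simp [sq]; ring
    rw [him]
    positivity
end

section
/- Fix τ ∈ ℝ and ω ∈ U, and let λ = λ(ω), the vectors v₋⁺, v₋⁻, v₊⁻ and the coefficients A, B be as in the context. Define η₊ : ℝ → ℂ² by η₊(x) = e^(-λx)·v₊⁻ for x ≥ 0 and η₊(x) = A·e^(λx)·v₋⁺ + B·e^(-λx)·v₋⁻ for x < 0. Then η₊ is continuous on ℝ, differentiable at every x ≠ 0, satisfies the dislocated Dirac eigenvalue equation at parameter τ with spectral parameter ω at every x ≠ 0 (i.e. i·σ₃·η₊'(x) + σ₁·η₊(x) = ω·η₊(x) for x < 0 and i·σ₃·η₊'(x)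 + σ⋆(τ)·η₊(x) = ω·η₊(x) for x > 0), and η₊(x) → 0 as x → +∞. -/
open Complex Filter Matrix

/-- `U = ℂ \ ((-∞,-1] ∪ [1,∞))`. -/
def U : Set ℂ := {ω : ℂ | ω.im ≠ 0 ∨ (-1 < ω.re ∧ ω.re < 1)}

/-- `λ(ω) = (1-ω²)^(1/2)`, principal branch of the complex square root. -/
noncomputable def lam (ω : ℂ) : ℂ := (1 - ω ^ 2) ^ ((1 : ℂ) / 2)

/-- Pauli matrix σ₁. -/
def σ1 : Matrix (Fin 2) (Fin 2) ℂ := !![0, 1; 1, 0]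

/-- Pauli matrix σ₃. -/
def σ3 : Matrix (Fin 2) (Fin 2) ℂ := !![1, 0; 0, -1]

/-- σ⋆(τ) = [[0, e^(-iτ)],[e^(iτ), 0]]. -/
noncomputable def σstar (τ : ℝ) : Matrix (Fin 2) (Fin 2) ℂ :=
  !![0, Complex.exp (-(Complex.I * τ)); Complex.exp (Complex.I * τ), 0]

/-- The decaying solution η₊: equal to `e^(-λx)·v₊⁻` for `x ≥ 0` and to
`A·e^(λx)·v₋⁺ + B·e^(-λx)·v₋⁻` for `x < 0`. -/
noncomputable def ηplus (τ : ℝ) (ω : ℂ) (x : ℝ) : Fin 2 → ℂ :=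
  if 0 ≤ x then
    Complex.exp (-(lam ω) * x) • ![Complex.exp (-(Complex.I * τ)), ω + Complex.I * lam ω]
  else
    ((Complex.exp (-(Complex.I * τ)) - 1) * (ω + Complex.I * lam ω) / (2 * Complex.I * lam ω)
        * Complex.exp (lam ω * x)) • ![1, ω - Complex.I * lam ω]
    + ((ω * (1 - Complex.exp (-(Complex.I * τ)))
          + Complex.I * lam ω * (1 + Complex.exp (-(Complex.I * τ)))) / (2 * Complex.I * lam ω)
        * Complex.exp (-(lam ω) * x)) • ![1, ω + Complex.I * lam ω]

/-!
On each half-line `η₊` is a combination of plane waves `x ↦ e^(μx) v`. Such a wave solves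
`iσ₃ f' + M f = ω f` exactly when `v` is an `ω`-eigenvector of the symbol `iμσ₃ + M`, and for
`M = σ₁` or `σ⋆(τ)` the vectors `v₋^±`, `v₊⁻` are such eigenvectors as soon as `μ² = 1 - ω²`,
i.e. for `μ = ±λ`. The coefficients `A`, `B` are the solution of `A v₋⁺ + B v₋⁻ = v₊⁻`, which glues
the two pieces continuously at `0`, and `Re λ > 0` makes `e^(-λx) v₊⁻` decay at `+∞`.
-/

theorem Complex.re_cpow_inv_two_pos {z : ℂ} (hz : z ∈ slitPlane) : 0 < (z ^ (2⁻¹ : ℂ)).re := by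
  rw [cpow_inv_two_re]
  apply Real.sqrt_pos.2
  rcases mem_slitPlane_iff.1 hz with hre | him
  · linarith [re_le_norm z]
  · linarith [neg_abs_le z.re, abs_re_lt_norm.2 him]

theorem one_sub_sq_mem_slitPlane {ω : ℂ} (hω : ω ∈ U) : 1 - ω ^ 2 ∈ slitPlane := by
  rw [mem_slitPlane_iff]
  simp only [sub_re, one_re, sub_im, one_im, pow_two, mul_re, mul_im]
  by_cases him : ω.im = 0
  · rcases hω with h | ⟨h1, h2⟩
    · exact absurd him h
    · left; rw [him]; nlinarith
  by_cases hre : ω.re = 0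
  · left; rw [hre]; nlinarith [sq_pos_of_ne_zero him]
  · right; have := mul_ne_zero hre him; contrapose! this; linarith

theorem lam_sq (ω : ℂ) : lam ω ^ 2 = 1 - ω ^ 2 := by
  rw [lam, one_div, cpow_ofNat_inv_pow]

theorem lam_re_pos {ω : ℂ} (hω : ω ∈ U) : 0 < (lam ω).re := by
  rw [lam, one_div]
  exact re_cpow_inv_two_pos (one_sub_sq_mem_slitPlane hω)

section ExpMode

variable {E : Type*} [NormedAddCommGroup E] [NormedSpace ℂ E]

noncomputable def expMode (μ : ℂ) (v : E) (x : ℝ) : E := exp (μ * x) • v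

theorem expMode_zero (μ : ℂ) (v : E) : expMode μ v 0 = v := by
  simp [expMode]

theorem hasDerivAt_expMode (μ : ℂ) (v : E) (x : ℝ) :
    HasDerivAt (expMode μ v) (μ • expMode μ v x) x := by
  have h := ((hasDerivAt_id (x : ℂ)).const_mul μ).cexp.comp_ofReal.smul_const v
  unfold expMode
  simpa [smul_smul, mul_comm] using h

theorem differentiable_expMode (μ : ℂ) (v : E) : Differentiable ℝ (expMode μ v) :=
  fun x => (hasDerivAt_expMode μ v x).differentiableAt

theorem tendsto_expMode_atTop {μ : ℂ} (hμ : μ.re < 0) (v : E) :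
    Tendsto (expMode μ v) atTop (nhds 0) := by
  have hre : Tendsto (fun x : ℝ => (μ * x).re) atTop atBot := by
    simpa using tendsto_id.const_mul_atTop_of_neg hμ
  unfold expMode
  simpa using (tendsto_exp_comap_re_atBot.comp (tendsto_comap_iff.2 hre)).smul_const v

end ExpMode

section DiracSymbol

variable {ω μ : ℂ}

noncomputable def diracSymbol (M : Matrix (Fin 2) (Fin 2) ℂ) (μ : ℂ) : Matrix (Fin 2) (Fin 2) ℂ :=
  (I * μ) • σ3 + M

theorem diracSymbol_σ1_mulVec (hμ : μ ^ 2 = 1 - ω ^ 2) :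
    diracSymbol σ1 μ *ᵥ ![1, ω - I * μ] = ω • ![1, ω - I * μ] := by
  ext i
  fin_cases i
  · simp [diracSymbol, σ1, σ3]
  · simp [diracSymbol, σ1, σ3]
    linear_combination (-1 : ℂ) * hμ + μ ^ 2 * I_sq

theorem diracSymbol_σstar_mulVec (τ : ℝ) (hμ : μ ^ 2 = 1 - ω ^ 2) :
    diracSymbol (σstar τ) μ *ᵥ ![exp (-(I * τ)), ω - I * μ]
      = ω • ![exp (-(I * τ)), ω - I * μ] := by
  have hτ : exp (I * τ) * exp (-(I * τ)) = 1 := by rw [← exp_add, add_neg_cancel, exp_zero]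
  ext i
  fin_cases i
  · simp [diracSymbol, σstar, σ3]
    ring
  · simp [diracSymbol, σstar, σ3]
    linear_combination (-1 : ℂ) * hμ + μ ^ 2 * I_sq + hτ

end DiracSymbol

def SolvesDiracAt (M : Matrix (Fin 2) (Fin 2) ℂ) (ω : ℂ) (f : ℝ → Fin 2 → ℂ) (x : ℝ) : Prop :=
  I • σ3 *ᵥ deriv f x + M *ᵥ f x = ω • f x

section SolvesDiracAt

variable {M : Matrix (Fin 2) (Fin 2) ℂ} {ω : ℂ} {f g : ℝ → Fin 2 → ℂ} {x : ℝ}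

theorem Filter.EventuallyEq.solvesDiracAt_iff (h : f =ᶠ[nhds x] g) :
    SolvesDiracAt M ω f x ↔ SolvesDiracAt M ω g x := by
  rw [SolvesDiracAt, SolvesDiracAt, h.deriv_eq, h.eq_of_nhds]

theorem SolvesDiracAt.add (hf : SolvesDiracAt M ω f x) (hg : SolvesDiracAt M ω g x)
    (hf' : DifferentiableAt ℝ f x) (hg' : DifferentiableAt ℝ g x) :
    SolvesDiracAt M ω (f + g) x := by
  rw [SolvesDiracAt, deriv_add hf' hg'] at *
  simp only [Pi.add_apply, mulVec_add, smul_add]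
  rw [← hf, ← hg]
  abel

theorem SolvesDiracAt.const_smul (hf : SolvesDiracAt M ω f x) (hf' : DifferentiableAt ℝ f x)
    (c : ℂ) : SolvesDiracAt M ω (c • f) x := by
  rw [SolvesDiracAt, deriv_const_smul c hf'] at *
  simp only [Pi.smul_apply, mulVec_smul, smul_comm _ c, ← smul_add, hf]

theorem solvesDiracAt_expMode {μ : ℂ} {v : Fin 2 → ℂ}
    (hv : diracSymbol M μ *ᵥ v = ω • v) : SolvesDiracAt M ω (expMode μ v) x := by
  rw [diracSymbol, add_mulVec, smul_mulVec] at hv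
  rw [SolvesDiracAt, (hasDerivAt_expMode μ v x).deriv, expMode]
  simp only [mulVec_smul]
  linear_combination (norm := module) exp (μ * x) • hv

end SolvesDiracAt

noncomputable def coefA (τ : ℝ) (ω : ℂ) : ℂ :=
  (exp (-(I * τ)) - 1) * (ω + I * lam ω) / (2 * I * lam ω)

noncomputable def coefB (τ : ℝ) (ω : ℂ) : ℂ :=
  (ω * (1 - exp (-(I * τ))) + I * lam ω * (1 + exp (-(I * τ)))) / (2 * I * lam ω)

noncomputable def ηplusRight (τ : ℝ) (ω : ℂ) : ℝ → Fin 2 → ℂ :=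
  expMode (-lam ω) ![exp (-(I * τ)), ω + I * lam ω]

noncomputable def ηplusLeft (τ : ℝ) (ω : ℂ) : ℝ → Fin 2 → ℂ :=
  coefA τ ω • expMode (lam ω) ![1, ω - I * lam ω]
    + coefB τ ω • expMode (-lam ω) ![1, ω + I * lam ω]

section ηplus

variable (τ : ℝ) (ω : ℂ)

theorem ηplus_of_nonneg {x : ℝ} (hx : 0 ≤ x) : ηplus τ ω x = ηplusRight τ ω x := by
  simp [ηplus, ηplusRight, expMode, hx]

theorem ηplus_of_neg {x : ℝ} (hx : x < 0) : ηplus τ ω x = ηplusLeft τ ω x := by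
  simp [ηplus, ηplusLeft, expMode, coefA, coefB, mul_smul, hx.not_ge]

theorem ηplusLeft_zero (hlam : lam ω ≠ 0) : ηplusLeft τ ω 0 = ηplusRight τ ω 0 := by
  simp only [ηplusLeft, ηplusRight, Pi.add_apply, Pi.smul_apply, expMode_zero]
  ext i
  fin_cases i <;> simp [coefA, coefB] <;> field_simp <;> ring

theorem differentiable_ηplusRight : Differentiable ℝ (ηplusRight τ ω) :=
  differentiable_expMode _ _

theorem differentiable_ηplusLeft : Differentiable ℝ (ηplusLeft τ ω) :=
  ((differentiable_expMode _ _).const_smul _).add ((differentiable_expMode _ _).const_smul _)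

theorem continuous_ηplus (hlam : lam ω ≠ 0) : Continuous (ηplus τ ω) := by
  have h : ηplus τ ω = fun x => if 0 ≤ x then ηplusRight τ ω x else ηplusLeft τ ω x := by
    ext1 x
    split_ifs with hx
    · exact ηplus_of_nonneg τ ω hx
    · exact ηplus_of_neg τ ω (not_le.1 hx)
  rw [h]
  exact (differentiable_ηplusRight τ ω).continuous.if_le (differentiable_ηplusLeft τ ω).continuous
    continuous_const continuous_id fun x hx => hx ▸ (ηplusLeft_zero τ ω hlam).symm

theorem solvesDiracAt_ηplusRight (x : ℝ) : SolvesDiracAt (σstar τ) ω (ηplusRight τ ω) x := by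
  have hv := diracSymbol_σstar_mulVec τ (show (-lam ω) ^ 2 = 1 - ω ^ 2 by rw [neg_sq, lam_sq])
  rw [show ω - I * -lam ω = ω + I * lam ω by ring] at hv
  exact solvesDiracAt_expMode hv

theorem solvesDiracAt_ηplusLeft (x : ℝ) : SolvesDiracAt σ1 ω (ηplusLeft τ ω) x := by
  have hv_pos := diracSymbol_σ1_mulVec (lam_sq ω)
  have hv_neg := diracSymbol_σ1_mulVec (show (-lam ω) ^ 2 = 1 - ω ^ 2 by rw [neg_sq, lam_sq])
  rw [show ω - I * -lam ω = ω + I * lam ω by ring] at hv_neg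
  exact ((solvesDiracAt_expMode hv_pos).const_smul (differentiable_expMode _ _ x) _).add
    ((solvesDiracAt_expMode hv_neg).const_smul (differentiable_expMode _ _ x) _)
    ((differentiable_expMode _ _ x).const_smul _) ((differentiable_expMode _ _ x).const_smul _)

theorem tendsto_ηplusRight_atTop (hlam : 0 < (lam ω).re) :
    Tendsto (ηplusRight τ ω) atTop (nhds 0) :=
  tendsto_expMode_atTop (by simpa using hlam) _

end ηplus

theorem stmt2 (τ : ℝ) (ω : ℂ) (hω : ω ∈ U) :
    Continuous (ηplus τ ω) ∧
    (∀ x : ℝ, x ≠ 0 → DifferentiableAt ℝ (ηplus τ ω) x) ∧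
    (∀ x : ℝ, x < 0 →
      Complex.I • σ3.mulVec (deriv (ηplus τ ω) x) + σ1.mulVec (ηplus τ ω x)
        = ω • ηplus τ ω x) ∧
    (∀ x : ℝ, 0 < x →
      Complex.I • σ3.mulVec (deriv (ηplus τ ω) x) + (σstar τ).mulVec (ηplus τ ω x)
        = ω • ηplus τ ω x) ∧
    Tendsto (ηplus τ ω) atTop (nhds 0) := by
  have hre := lam_re_pos hω
  have hne : lam ω ≠ 0 := fun h => by simp [h] at hre
  have right_eq {x : ℝ} (hx : 0 < x) : ηplus τ ω =ᶠ[nhds x] ηplusRight τ ω := by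
    filter_upwards [Ioi_mem_nhds hx] with y hy using ηplus_of_nonneg τ ω (le_of_lt hy)
  have left_eq {x : ℝ} (hx : x < 0) : ηplus τ ω =ᶠ[nhds x] ηplusLeft τ ω := by
    filter_upwards [Iio_mem_nhds hx] with y hy using ηplus_of_neg τ ω hy
  refine ⟨continuous_ηplus τ ω hne, fun x hx => ?_,
    fun x hx => (left_eq hx).solvesDiracAt_iff.2 (solvesDiracAt_ηplusLeft τ ω x),
    fun x hx => (right_eq hx).solvesDiracAt_iff.2 (solvesDiracAt_ηplusRight τ ω x),
    (tendsto_ηplusRight_atTop τ ω hre).congr' ?_⟩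
  · rcases hx.lt_or_gt with hx | hx
    · exact (left_eq hx).differentiableAt_iff.2 (differentiable_ηplusLeft τ ω x)
    · exact (right_eq hx).differentiableAt_iff.2 (differentiable_ηplusRight τ ω x)
  · filter_upwards [eventually_ge_atTop 0] with x hx using (ηplus_of_nonneg τ ω hx).symm
end

section
/- Fix τ ∈ (0,2π), set s = sin(τ/2) (which is positive) and ω_τ = -cos(τ/2), and define ψ : ℝ → ℂ² by ψ(x) = e^(-s·|x|)·(1, -e^(iτ/2)). Then: (i) ψ is continuous on ℝ and differentiable at every x ≠ 0; (ii) ψ satisfies the dislocated Dirac eigenvalue equation at parameter τ with spectral parameter ω_τ at every x ≠ 0, i.e. i·σ₃·ψ'(x) + σ₁·ψ(x) = ω_τ·ψ(x) for x < 0 and i·σ₃·ψ'(x) + σ⋆(τ)·ψ(x) = ω_τ·ψ(x) for x > 0; (iii) ∫_ℝ (|ψ₁(x)|² + |ψ₂(x)|²) dx = 2/sin(τ/2), so ψ is a nonzero square-integrable eigenfunction and ω_τ is an eigenvalue in the spectral gap (-1,1), with ω_τ² = cos²(τ/2). -/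
open Complex Matrix MeasureTheory

/-!
On each half-line ψ = e^{-s|x|} v is a real multiple of the fixed vector v = (1, -e^{iτ/2}) and
ψ' = ∓s ψ, so the Dirac equation reduces to the 2×2 eigenvector identities
(i s σ₃ + σ₁) v = -cos(τ/2) v and (-i s σ₃ + σ⋆(τ)) v = -cos(τ/2) v,
both consequences of e^{iτ/2} = cos(τ/2) + i sin(τ/2). Since |v₁| = |v₂| = 1, the squared norm of ψ
is 2 e^{-2s|x|}, whose integral is 2/s.
-/

theorem hasDerivAt_exp_neg_mul_abs_smul {E : Type*} [NormedAddCommGroup E] [NormedSpace ℝ E]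
    (a : ℝ) (v : E) {x : ℝ} (hx : x ≠ 0) :
    HasDerivAt (fun y => Real.exp (-a * |y|) • v)
      ((-a * SignType.sign x * Real.exp (-a * |x|)) • v) x := by
  convert (((hasDerivAt_abs hx).const_mul (-a)).exp).smul_const v using 2
  ring

theorem integral_exp_neg_mul_abs {b : ℝ} (hb : 0 < b) : ∫ x, Real.exp (-b * |x|) = 2 / b := by
  rw [integral_comp_abs (f := fun t => Real.exp (-b * t)), integral_exp_mul_Ioi (by linarith)]
  field_simp
  simp

theorem norm_sq_add_norm_sq_real_smul_vecCons (r : ℝ) (a b : ℂ) :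
    ‖(r • ![a, b]) 0‖ ^ 2 + ‖(r • ![a, b]) 1‖ ^ 2 = r ^ 2 * (‖a‖ ^ 2 + ‖b‖ ^ 2) := by
  simp only [Pi.smul_apply, cons_val_zero, cons_val_one, norm_smul, Real.norm_eq_abs, mul_pow,
    sq_abs]
  ring

theorem dirac_eq_real_smul {n : Type*} [Fintype n] {N M : Matrix n n ℂ} {v : n → ℂ} {ω : ℂ}
    {a : ℝ} (h : I • N *ᵥ (a • v) + M *ᵥ v = ω • v) (r : ℝ) :
    I • N *ᵥ ((a * r) • v) + M *ᵥ (r • v) = ω • r • v := by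
  rw [mul_comm, mul_smul, mulVec_smul N r, mulVec_smul M r, smul_comm I r, ← smul_add, h,
    smul_comm]

theorem exp_I_mul (z : ℂ) : exp (I * z) = cos z + sin z * I := by
  rw [mul_comm, exp_mul_I]

theorem exp_neg_I_mul (z : ℂ) : exp (-(I * z)) = cos z - sin z * I := by
  rw [← mul_neg, exp_I_mul, cos_neg, sin_neg, neg_mul, sub_eq_add_neg]

theorem dirac_left_eigenvector (τ : ℝ) :
    I • σ3 *ᵥ (Real.sin (τ / 2) • ![1, -exp (I * (τ / 2))]) + σ1 *ᵥ ![1, -exp (I * (τ / 2))]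
      = (-((Real.cos (τ / 2) : ℝ) : ℂ)) • ![1, -exp (I * (τ / 2))] := by
  rw [exp_I_mul]
  ext i; fin_cases i <;> simp [σ1, σ3, real_smul]
  · ring
  · linear_combination (-1) * sin_sq_add_cos_sq (τ / 2 : ℂ) + sin (τ / 2 : ℂ) ^ 2 * I_sq

theorem dirac_right_eigenvector (τ : ℝ) :
    I • σ3 *ᵥ ((-Real.sin (τ / 2)) • ![1, -exp (I * (τ / 2))])
        + σstar τ *ᵥ ![1, -exp (I * (τ / 2))]
      = (-((Real.cos (τ / 2) : ℝ) : ℂ)) • ![1, -exp (I * (τ / 2))] := by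
  have hsq : exp (I * τ) = exp (I * (τ / 2)) ^ 2 := by rw [← exp_nat_mul]; ring_nf
  have hsq_neg : exp (-(I * τ)) = exp (-(I * (τ / 2))) ^ 2 := by rw [← exp_nat_mul]; ring_nf
  rw [σstar, hsq, hsq_neg, exp_I_mul, exp_neg_I_mul]
  ext i; fin_cases i <;> simp [σ3, real_smul]
  · linear_combination (I * sin (τ / 2 : ℂ) - cos (τ / 2 : ℂ)) * sin_sq_add_cos_sq (τ / 2 : ℂ)
      + (sin (τ / 2 : ℂ) ^ 2 * cos (τ / 2 : ℂ) - I * sin (τ / 2 : ℂ) ^ 3) * I_sq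
  · ring

theorem stmt7 (τ : ℝ) (hτ : τ ∈ Set.Ioo 0 (2 * Real.pi)) :
    let s : ℝ := Real.sin (τ / 2)
    let ωτ : ℂ := -((Real.cos (τ / 2) : ℝ) : ℂ)
    let ψ : ℝ → Fin 2 → ℂ := fun x =>
      Real.exp (-s * |x|) • ![1, -Complex.exp (Complex.I * (τ / 2))]
    0 < s ∧
    Continuous ψ ∧
    (∀ x : ℝ, x ≠ 0 → DifferentiableAt ℝ ψ x) ∧
    (∀ x : ℝ, x < 0 →
      Complex.I • σ3.mulVec (deriv ψ x) + σ1.mulVec (ψ x) = ωτ • ψ x) ∧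
    (∀ x : ℝ, 0 < x →
      Complex.I • σ3.mulVec (deriv ψ x) + (σstar τ).mulVec (ψ x) = ωτ • ψ x) ∧
    (∫ x : ℝ, (‖ψ x 0‖ ^ 2 + ‖ψ x 1‖ ^ 2))
      = 2 / Real.sin (τ / 2) ∧
    (-1 < ωτ.re ∧ ωτ.re < 1 ∧ ωτ.im = 0) ∧
    ωτ ^ 2 = ((Real.cos (τ / 2) : ℝ) : ℂ) ^ 2 := by
  intro s ωτ ψ
  have hs : 0 < s := Real.sin_pos_of_pos_of_lt_pi (by linarith [hτ.1]) (by linarith [hτ.2])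
  have hψ' (x : ℝ) (hx : x ≠ 0) := hasDerivAt_exp_neg_mul_abs_smul s
    ![1, -Complex.exp (Complex.I * (τ / 2))] hx
  have hv : ‖(1 : ℂ)‖ ^ 2 + ‖-exp (I * (τ / 2))‖ ^ 2 = 2 := by
    norm_num [norm_exp]
  have hnorm (x : ℝ) : ‖ψ x 0‖ ^ 2 + ‖ψ x 1‖ ^ 2 = 2 * Real.exp (-(2 * s) * |x|) := by
    rw [norm_sq_add_norm_sq_real_smul_vecCons, hv, ← Real.exp_nat_mul]
    ring_nf
  have hcos : |Real.cos (τ / 2)| < 1 := by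
    rw [← sq_lt_one_iff_abs_lt_one]
    nlinarith [Real.sin_sq_add_cos_sq (τ / 2)]
  refine ⟨hs, by fun_prop, fun x hx => (hψ' x hx).differentiableAt, fun x hx => ?_, fun x hx => ?_,
    ?_, ?_, by ring⟩
  · rw [(hψ' x hx.ne).deriv, sign_neg hx, SignType.coe_neg_one, mul_neg_one, neg_neg]
    exact dirac_eq_real_smul (dirac_left_eigenvector τ) _
  · rw [(hψ' x hx.ne').deriv, sign_pos hx, SignType.coe_one, mul_one]
    exact dirac_eq_real_smul (dirac_right_eigenvector τ) _
  · change _ = 2 / s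
    simp_rw [hnorm]
    rw [integral_const_mul, integral_exp_neg_mul_abs (by positivity)]
    field_simp
  · obtain ⟨hlo, hhi⟩ := abs_lt.mp hcos
    simp only [ωτ, neg_re, ofReal_re, neg_im, ofReal_im, neg_zero, and_true]
    constructor <;> linarith
end

section
/- Fix τ ∈ ℝ and k ∈ ℝ, and let ξ₊, ξ₋ be the right and left Jost solutions at k (as in the context). Then for every x ∈ ℝ: ξ₋,₁(x)·ξ₊,₂(x) - ξ₋,₂(x)·ξ₊,₁(x) = φ(k,τ), where φ(k,τ) = k(e^(-iτ)+1) - √(1+k²)(e^(-iτ)-1). Moreover, if k ≠ 0 then φ(k,τ) ≠ 0, so ξ₊ and ξ₋ are linearly independent. -/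
open Complex Matrix

/-- `ω_k = √(1+k²)`. -/
noncomputable def ωk (k : ℝ) : ℝ := Real.sqrt (1 + k ^ 2)

/-- A right Jost solution at `k`: continuous, equal to `e^(ikx)·(e^(-iτ), ω_k+k)` for
`x ≥ 0`, differentiable on `(-∞,0)` and solving `i·σ₃·ξ' + σ₁·ξ = ω_k·ξ` there. -/
def IsRightJost (τ k : ℝ) (ξ : ℝ → Fin 2 → ℂ) : Prop :=
  Continuous ξ ∧
  (∀ x : ℝ, x < 0 → DifferentiableAt ℝ ξ x) ∧
  (∀ x : ℝ, 0 ≤ x →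
    ξ x = Complex.exp (Complex.I * k * x) •
      ![Complex.exp (-(Complex.I * τ)), ((ωk k : ℝ) : ℂ) + k]) ∧
  (∀ x : ℝ, x < 0 →
    Complex.I • σ3.mulVec (deriv ξ x) + σ1.mulVec (ξ x) = (((ωk k : ℝ) : ℂ)) • ξ x)

/-- A left Jost solution at `k`: continuous, equal to `e^(-ikx)·(1, ω_k-k)` for
`x ≤ 0`, differentiable on `(0,∞)` and solving `i·σ₃·ξ' + σ⋆(τ)·ξ = ω_k·ξ` there. -/
def IsLeftJost (τ k : ℝ) (ξ : ℝ → Fin 2 → ℂ) : Prop :=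
  Continuous ξ ∧
  (∀ x : ℝ, 0 < x → DifferentiableAt ℝ ξ x) ∧
  (∀ x : ℝ, x ≤ 0 →
    ξ x = Complex.exp (-(Complex.I * k * x)) • ![1, ((ωk k : ℝ) : ℂ) - k]) ∧
  (∀ x : ℝ, 0 < x →
    Complex.I • σ3.mulVec (deriv ξ x) + (σstar τ).mulVec (ξ x) = (((ωk k : ℝ) : ℂ)) • ξ x)

lemma hasDerivAt_cexp_mul (c : ℂ) (x : ℝ) :
    HasDerivAt (fun y : ℝ => Complex.exp (c * y)) (c * Complex.exp (c * x)) x := by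
  have h : HasDerivAt (fun z : ℂ => Complex.exp (c * z)) (Complex.exp (c * (x : ℂ)) * c) (x : ℂ) := by
    simpa using ((hasDerivAt_id (x : ℂ)).const_mul c).cexp
  simpa [mul_comm] using h.comp_ofReal

theorem stmt10 (τ k : ℝ) (ξp ξm : ℝ → Fin 2 → ℂ)
    (hp : IsRightJost τ k ξp) (hm : IsLeftJost τ k ξm) :
    (∀ x : ℝ,
      ξm x 0 * ξp x 1 - ξm x 1 * ξp x 0
        = (k : ℂ) * (Complex.exp (-(Complex.I * τ)) + 1)
          - ((Real.sqrt (1 + k ^ 2) : ℝ) : ℂ) * (Complex.exp (-(Complex.I * τ)) - 1)) ∧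
    (k ≠ 0 →
      (k : ℂ) * (Complex.exp (-(Complex.I * τ)) + 1)
        - ((Real.sqrt (1 + k ^ 2) : ℝ) : ℂ) * (Complex.exp (-(Complex.I * τ)) - 1) ≠ 0) ∧
    (k ≠ 0 → ∀ a b : ℂ, (∀ x : ℝ, a • ξp x + b • ξm x = 0) → a = 0 ∧ b = 0) := by
  obtain ⟨hpc, hpd, hpE, hpO⟩ := hp
  obtain ⟨hmc, hmd, hmE, hmO⟩ := hm
  set e : ℂ := Complex.exp (-(Complex.I * τ)) with hedef
  set ω : ℂ := ((Real.sqrt (1 + k ^ 2) : ℝ) : ℂ) with hωdef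
  have hω2 : ω ^ 2 = 1 + (k : ℂ) ^ 2 := by
    rw [hωdef]
    norm_cast
    rw [Real.sq_sqrt (by positivity)]
  have he : e * Complex.exp (Complex.I * τ) = 1 := by
    rw [hedef, ← Complex.exp_add]; simp
  set W : ℝ → ℂ := fun x => ξm x 0 * ξp x 1 - ξm x 1 * ξp x 0 with hWdef
  have hWc : Continuous W := by
    exact (((continuous_apply 0).comp hmc).mul ((continuous_apply 1).comp hpc)).sub
      (((continuous_apply 1).comp hmc).mul ((continuous_apply 0).comp hpc))
  -- derivative zero on the right
  have hderpos : ∀ x : ℝ, 0 < x → HasDerivAt W 0 x := by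
    intro x hx
    have hdm := hasDerivAt_pi.mp (hmd x hx).hasDerivAt
    have heq := hmO x hx
    have h0 := congrFun heq 0
    have h1 := congrFun heq 1
    simp only [ωk] at h0 h1
    simp [σ3, σstar, Matrix.mulVec, dotProduct, Fin.sum_univ_two, ← hedef, ← hωdef] at h0 h1
    have hd0 : deriv ξm x 0 = -Complex.I * (ω * ξm x 0 - e * ξm x 1) := by
      linear_combination (-Complex.I) * h0 + (deriv ξm x 0) * Complex.I_sq
    have hd1 : deriv ξm x 1 = Complex.I * (ω * ξm x 1 - Complex.exp (Complex.I * τ) * ξm x 0) := by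
      linear_combination Complex.I * h1 + (deriv ξm x 1) * Complex.I_sq
    -- explicit derivatives of ξp components
    have hmem : Set.Ioi (0 : ℝ) ∈ nhds x := Ioi_mem_nhds hx
    have hp0 : HasDerivAt (fun y : ℝ => ξp y 0)
        (Complex.I * k * Complex.exp (Complex.I * k * x) * e) x := by
      have h := (hasDerivAt_cexp_mul (Complex.I * k) x).mul_const e
      apply h.congr_of_eventuallyEq
      filter_upwards [hmem] with y hy
      rw [hpE y hy.le]
      simp [ωk, ← hedef, mul_assoc]
    have hp1 : HasDerivAt (fun y : ℝ => ξp y 1)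
        (Complex.I * k * Complex.exp (Complex.I * k * x) * (ω + k)) x := by
      have h := (hasDerivAt_cexp_mul (Complex.I * k) x).mul_const (ω + k)
      apply h.congr_of_eventuallyEq
      filter_upwards [hmem] with y hy
      rw [hpE y hy.le]
      simp [ωk, ← hωdef, mul_assoc]
    have hpv0 : ξp x 0 = Complex.exp (Complex.I * k * x) * e := by
      rw [hpE x hx.le]; simp [ωk, ← hedef]
    have hpv1 : ξp x 1 = Complex.exp (Complex.I * k * x) * (ω + k) := by
      rw [hpE x hx.le]; simp [ωk, ← hωdef]
    have hW' : HasDerivAt W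
        (deriv ξm x 0 * ξp x 1 + ξm x 0 * (Complex.I * k * Complex.exp (Complex.I * k * x) * (ω + k))
          - (deriv ξm x 1 * ξp x 0 + ξm x 1 * (Complex.I * k * Complex.exp (Complex.I * k * x) * e))) x :=
      ((hdm 0).mul hp1).sub ((hdm 1).mul hp0)
    convert hW' using 1
    rw [hd0, hd1, hpv0, hpv1]
    linear_combination (-(Complex.I * Complex.exp (Complex.I * k * x) * ξm x 0)) * he +
      (Complex.I * Complex.exp (Complex.I * k * x) * ξm x 0) * hω2
  -- derivative zero on the left
  have hderneg : ∀ x : ℝ, x < 0 → HasDerivAt W 0 x := by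
    intro x hx
    have hdp := hasDerivAt_pi.mp (hpd x hx).hasDerivAt
    have heq := hpO x hx
    have h0 := congrFun heq 0
    have h1 := congrFun heq 1
    simp only [ωk] at h0 h1
    simp [σ3, σ1, Matrix.mulVec, dotProduct, Fin.sum_univ_two, ← hωdef] at h0 h1
    have hd0 : deriv ξp x 0 = -Complex.I * (ω * ξp x 0 - ξp x 1) := by
      linear_combination (-Complex.I) * h0 + (deriv ξp x 0) * Complex.I_sq
    have hd1 : deriv ξp x 1 = Complex.I * (ω * ξp x 1 - ξp x 0) := by
      linear_combination Complex.I * h1 + (deriv ξp x 1) * Complex.I_sq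
    have hmem : Set.Iio (0 : ℝ) ∈ nhds x := Iio_mem_nhds hx
    have hm0 : HasDerivAt (fun y : ℝ => ξm y 0)
        (-(Complex.I * k * Complex.exp (-(Complex.I * k * x)))) x := by
      have h := hasDerivAt_cexp_mul (-(Complex.I * k)) x
      simp only [neg_mul] at h
      apply h.congr_of_eventuallyEq
      filter_upwards [hmem] with y hy
      rw [hmE y hy.le]
      simp [ωk]
    have hm1 : HasDerivAt (fun y : ℝ => ξm y 1)
        (-(Complex.I * k * Complex.exp (-(Complex.I * k * x)) * (ω - k))) x := by
      have h := (hasDerivAt_cexp_mul (-(Complex.I * k)) x).mul_const (ω - k)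
      simp only [neg_mul] at h
      apply h.congr_of_eventuallyEq
      filter_upwards [hmem] with y hy
      rw [hmE y hy.le]
      simp [ωk, ← hωdef]
    have hmv0 : ξm x 0 = Complex.exp (-(Complex.I * k * x)) := by
      rw [hmE x hx.le]; simp [ωk]
    have hmv1 : ξm x 1 = Complex.exp (-(Complex.I * k * x)) * (ω - k) := by
      rw [hmE x hx.le]; simp [ωk, ← hωdef]
    have hW' : HasDerivAt W
        ((-(Complex.I * k * Complex.exp (-(Complex.I * k * x)))) * ξp x 1 + ξm x 0 * deriv ξp x 1
          - ((-(Complex.I * k * Complex.exp (-(Complex.I * k * x)) * (ω - k))) * ξp x 0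
              + ξm x 1 * deriv ξp x 0)) x :=
      (hm0.mul (hdp 1)).sub (hm1.mul (hdp 0))
    convert hW' using 1
    rw [hd0, hd1, hmv0, hmv1]
    linear_combination (-(Complex.I * Complex.exp (-(Complex.I * k * x)) * ξp x 0)) * hω2
  -- value at 0
  have hW0 : W 0 = (k : ℂ) * (e + 1) - ω * (e - 1) := by
    have h1 := hpE 0 le_rfl
    have h2 := hmE 0 le_rfl
    simp only [hWdef]
    rw [h1, h2]
    simp [ωk, ← hedef, ← hωdef]
    ring
  -- W constant
  have hconst : ∀ x : ℝ, W x = W 0 := by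
    intro x
    rcases lt_trichotomy x 0 with hx | hx | hx
    · have key : ∀ ε ∈ Set.Ico x (0 : ℝ), W ε = W x := by
        intro ε hε
        exact constant_of_has_deriv_right_zero
          (hWc.continuousOn (s := Set.Icc x ε))
          (fun y hy => (hderneg y (lt_of_lt_of_le hy.2 hε.2.le)).hasDerivWithinAt)
          ε ⟨hε.1, le_refl ε⟩
      have h1 : Filter.Tendsto W (nhdsWithin 0 (Set.Iio 0)) (nhds (W 0)) :=
        (hWc.tendsto 0).mono_left nhdsWithin_le_nhds
      have h2 : Filter.Tendsto W (nhdsWithin 0 (Set.Iio 0)) (nhds (W x)) := by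
        have hev : W =ᶠ[nhdsWithin 0 (Set.Iio 0)] fun _ => W x := by
          filter_upwards [Ico_mem_nhdsLT_of_mem (Set.mem_Ioc.mpr ⟨hx, le_refl (0:ℝ)⟩)] with ε hε
          exact key ε hε
        exact hev.tendsto
      exact tendsto_nhds_unique h2 h1
    · rw [hx]
    · have key : ∀ ε ∈ Set.Ioc (0 : ℝ) x, W x = W ε := by
        intro ε hε
        exact constant_of_has_deriv_right_zero
          (hWc.continuousOn (s := Set.Icc ε x))
          (fun y hy => (hderpos y (lt_of_lt_of_le hε.1 hy.1)).hasDerivWithinAt)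
          x ⟨hε.2, le_refl x⟩
      have h1 : Filter.Tendsto W (nhdsWithin 0 (Set.Ioi 0)) (nhds (W 0)) :=
        (hWc.tendsto 0).mono_left nhdsWithin_le_nhds
      have h2 : Filter.Tendsto W (nhdsWithin 0 (Set.Ioi 0)) (nhds (W x)) := by
        have hev : W =ᶠ[nhdsWithin 0 (Set.Ioi 0)] fun _ => W x := by
          filter_upwards [Ioc_mem_nhdsGT_of_mem (Set.mem_Ico.mpr ⟨le_refl (0:ℝ), hx⟩)] with ε hε
          exact (key ε hε).symm
        exact hev.tendsto
      exact tendsto_nhds_unique h2 h1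
  have part1 : ∀ x : ℝ,
      ξm x 0 * ξp x 1 - ξm x 1 * ξp x 0 = (k : ℂ) * (e + 1) - ω * (e - 1) := by
    intro x
    have := hconst x
    rw [hW0] at this
    exact this
  have part2 : k ≠ 0 → (k : ℂ) * (e + 1) - ω * (e - 1) ≠ 0 := by
    intro hk h
    have he2 : e = (Real.cos τ : ℂ) - (Real.sin τ : ℂ) * Complex.I := by
      rw [hedef, show -(Complex.I * (τ : ℂ)) = ((-τ : ℝ) : ℂ) * Complex.I by push_cast; ring,
        Complex.exp_mul_I, ← Complex.ofReal_cos, ← Complex.ofReal_sin]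
      push_cast
      simp [Real.cos_neg, Real.sin_neg]
      ring
    rw [he2, hωdef] at h
    have hre := congrArg Complex.re h
    have him := congrArg Complex.im h
    simp [Complex.ext_iff, Complex.cos_ofReal_re, Complex.sin_ofReal_re] at hre him
    set s := Real.sqrt (1 + k ^ 2) with hsdef
    have hs1 : 1 ≤ s := by
      have h' := Real.sqrt_le_sqrt (show (1:ℝ) ≤ 1 + k ^ 2 by nlinarith)
      simpa [hsdef] using h'
    have hsk : s ≠ k := by
      intro hcontr
      have : s ^ 2 = 1 + k ^ 2 := Real.sq_sqrt (by positivity)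
      nlinarith
    have hsin : Real.sin τ = 0 := by
      have hfac : (s - k) * Real.sin τ = 0 := by linarith
      rcases mul_eq_zero.mp hfac with h' | h'
      · exact absurd (by linarith : s = k) hsk
      · exact h'
    have hcos2 : (Real.cos τ - 1) * (Real.cos τ + 1) = 0 := by
      nlinarith [Real.sin_sq_add_cos_sq τ]
    rcases mul_eq_zero.mp hcos2 with h' | h'
    · have hc : Real.cos τ = 1 := by linarith
      rw [hc] at hre
      norm_num at hre
      exact hk (by linarith)
    · have hc : Real.cos τ = -1 := by linarith
      rw [hc] at hre
      norm_num at hre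
      linarith
  refine ⟨part1, part2, ?_⟩
  intro hk a b hab
  have h := hab 0
  have h0 := congrFun h 0
  have h1 := congrFun h 1
  rw [hpE 0 le_rfl, hmE 0 le_rfl] at h0 h1
  simp [ωk, ← hedef, ← hωdef] at h0 h1
  have ha : a * ((k : ℂ) * (e + 1) - ω * (e - 1)) = 0 := by
    linear_combination h1 - (ω - k) * h0
  have ha0 : a = 0 := by
    rcases mul_eq_zero.mp ha with h' | h'
    · exact h'
    · exact absurd h' (part2 hk)
  refine ⟨ha0, ?_⟩
  rw [ha0] at h0
  simpa using h0
end

section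
/- Fix τ ∈ ℝ and k ∈ ℝ with k ≠ 0. Let ξ₊ᵏ, ξ₋ᵏ be the right and left Jost solutions at k, and ξ₊⁻ᵏ, ξ₋⁻ᵏ the right and left Jost solutions at -k (as in the context), and set φ(k,τ) = k(e^(-iτ)+1) - √(1+k²)(e^(-iτ)-1), which is nonzero. Then: (i) there exists a unique pair (T₁, R₁) ∈ ℂ × ℂ such that ξ₊⁻ᵏ(x) = T₁·ξ₋ᵏ(x) - R₁·ξ₊ᵏ(x) for all x ∈ ℝ, and T₁ = 2·e^(-iτ)·k/φ(k,τ); (ii) there exists a unique pair (T₂, R₂) ∈ ℂ × ℂ such that ξ₋⁻ᵏ(x) = T₂·ξ₊ᵏ(x) - R₂·ξ₋ᵏ(x) for all x ∈ ℝ, and T₂ = 2k/φ(k,τ); in particular T₁ = e^(-iτ)·T₂. -/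
open Complex Matrix

/-!
Both Jost solutions at `k` and at `-k` solve one and the same first-order system
`ξ' = M₋ ξ` on `x < 0` and `ξ' = M₊ ξ` on `x > 0` with constant matrices, since the
equations depend on `k` only through `ω_k = ω_{-k}`. By Grönwall's inequality a continuous
solution vanishing at `0` vanishes on both half-lines, so a linear relation between solutions
holds everywhere as soon as it holds at `x = 0`. At `0` the Jost solutions are explicit vectors
of `ℂ²`, and the coefficients are given by Cramer's rule; the determinant is `φ(k, τ)`,
which cannot vanish because `|e^(-iτ) (ω - k)| = ω - k ≠ ω + k` for `k ≠ 0`.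
-/

open Set Filter Topology

section LinearODE

variable {E : Type*} [NormedAddCommGroup E] [NormedSpace ℝ E]

theorem eq_zero_of_hasDerivAt_clm_of_nonneg (A : E →L[ℝ] E) {f : ℝ → E} (hf : Continuous f)
    (h0 : f 0 = 0) (hf' : ∀ x, 0 < x → HasDerivAt f (A (f x)) x) {x : ℝ} (hx : 0 ≤ x) :
    f x = 0 := by
  have hA0 : Tendsto (fun y => A (f y)) (𝓝[>] 0) (𝓝 0) := by
    simpa [h0, Function.comp_def] using
      ((A.continuous.comp hf).tendsto 0).mono_left nhdsWithin_le_nhds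
  have hderiv0 : HasDerivWithinAt f (A (f 0)) (Ici 0) 0 := by
    rw [h0, map_zero]
    refine hasDerivWithinAt_Ici_of_tendsto_deriv
      (fun y hy => (hf' y hy).differentiableAt.differentiableWithinAt)
      hf.continuousWithinAt self_mem_nhdsWithin (hA0.congr' ?_)
    filter_upwards [self_mem_nhdsWithin] with y hy using (hf' y hy).deriv.symm
  refine eq_zero_of_abs_deriv_le_mul_abs_self_of_eq_zero_right (K := ‖A‖) hf.continuousOn
    (fun y hy => ?_) h0 (fun y _ => A.le_opNorm (f y)) x ⟨hx, le_rfl⟩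
  rcases hy.1.eq_or_lt with rfl | hy0
  · exact hderiv0
  · exact (hf' y hy0).hasDerivWithinAt

theorem eq_zero_of_hasDerivAt_clm_of_nonpos (A : E →L[ℝ] E) {f : ℝ → E} (hf : Continuous f)
    (h0 : f 0 = 0) (hf' : ∀ x < 0, HasDerivAt f (A (f x)) x) {x : ℝ} (hx : x ≤ 0) :
    f x = 0 := by
  have hreflect : ∀ y, 0 < y → HasDerivAt (fun t => f (-t)) ((-A) (f (-y))) y := fun y hy => by
    simpa [Function.comp_def] using (hf' (-y) (neg_neg_of_pos hy)).scomp y (hasDerivAt_neg y)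
  simpa using eq_zero_of_hasDerivAt_clm_of_nonneg (-A) (hf.comp continuous_neg)
    (by simpa using h0) hreflect (neg_nonneg.mpr hx)

end LinearODE

section PiecewiseSystem

variable {n : Type*} [Fintype n]

def piecewiseSolutions (Mneg Mpos : Matrix n n ℂ) : Submodule ℂ (ℝ → n → ℂ) where
  carrier := {ξ | Continuous ξ ∧ (∀ x < 0, HasDerivAt ξ (Mneg *ᵥ ξ x) x) ∧
    ∀ x, 0 < x → HasDerivAt ξ (Mpos *ᵥ ξ x) x}
  add_mem' := by
    rintro ξ η ⟨hξ, hξn, hξp⟩ ⟨hη, hηn, hηp⟩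
    refine ⟨hξ.add hη, fun x hx => ?_, fun x hx => ?_⟩
    · simpa [mulVec_add] using (hξn x hx).add (hηn x hx)
    · simpa [mulVec_add] using (hξp x hx).add (hηp x hx)
  zero_mem' := ⟨continuous_const, fun x _ => by simp, fun x _ => by simp⟩
  smul_mem' := by
    rintro c ξ ⟨hξ, hξn, hξp⟩
    refine ⟨hξ.const_smul c, fun x hx => ?_, fun x hx => ?_⟩
    · simpa [mulVec_smul] using (hξn x hx).const_smul c
    · simpa [mulVec_smul] using (hξp x hx).const_smul c

variable {Mneg Mpos : Matrix n n ℂ}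

theorem piecewiseSolutions.eq_of_apply_zero_eq {ξ η : ℝ → n → ℂ}
    (hξ : ξ ∈ piecewiseSolutions Mneg Mpos) (hη : η ∈ piecewiseSolutions Mneg Mpos)
    (h0 : ξ 0 = η 0) : ξ = η := by
  obtain ⟨hc, hneg, hpos⟩ := sub_mem hξ hη
  ext1 x
  rw [← sub_eq_zero]
  rcases le_total x 0 with hx | hx
  · exact eq_zero_of_hasDerivAt_clm_of_nonpos
      (Mneg.mulVecLin.restrictScalars ℝ).toContinuousLinearMap hc (sub_eq_zero.mpr h0) hneg hx
  · exact eq_zero_of_hasDerivAt_clm_of_nonneg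
      (Mpos.mulVecLin.restrictScalars ℝ).toContinuousLinearMap hc (sub_eq_zero.mpr h0) hpos hx

theorem piecewiseSolutions.forall_eq_smul_sub_smul_iff {ξ η ζ : ℝ → n → ℂ}
    (hξ : ξ ∈ piecewiseSolutions Mneg Mpos) (hη : η ∈ piecewiseSolutions Mneg Mpos)
    (hζ : ζ ∈ piecewiseSolutions Mneg Mpos) {T R : ℂ} :
    (∀ x, ξ x = T • η x - R • ζ x) ↔ ξ 0 = T • η 0 - R • ζ 0 :=
  ⟨fun h => h 0, fun h => congrFun (eq_of_apply_zero_eq hξ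
    (sub_mem (Submodule.smul_mem _ T hη) (Submodule.smul_mem _ R hζ)) h)⟩

theorem hasDerivAt_mulVec_of_eventuallyEq_exp_smul {M : Matrix n n ℂ} {μ : ℂ} {v : n → ℂ}
    (hv : M *ᵥ v = μ • v) {ξ : ℝ → n → ℂ} {x : ℝ}
    (hξ : ξ =ᶠ[𝓝 x] fun y : ℝ => Complex.exp (μ * y) • v) :
    HasDerivAt ξ (M *ᵥ ξ x) x := by
  have hwave := (((hasDerivAt_id x).ofReal_comp.const_mul μ).cexp.smul_const v)
  rw [hξ.eq_of_nhds, mulVec_smul, hv, smul_smul]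
  simpa [mul_comm] using hwave.congr_of_eventuallyEq hξ

end PiecewiseSystem

theorem vec2_eq_smul_sub_smul_iff {K : Type*} [Field K] {a₀ a₁ b₀ b₁ c₀ c₁ d T R : K}
    (hd : b₀ * c₁ - b₁ * c₀ = d) (hd0 : d ≠ 0) :
    ![a₀, a₁] = T • ![b₀, b₁] - R • ![c₀, c₁] ↔
      T = (a₀ * c₁ - a₁ * c₀) / d ∧ R = (a₀ * b₁ - a₁ * b₀) / d := by
  subst hd
  constructor
  · intro h
    have h₀ := congrFun h 0
    have h₁ := congrFun h 1
    simp only [Fin.isValue, cons_val_zero, cons_val_one, Pi.sub_apply, Pi.smul_apply,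
      smul_eq_mul] at h₀ h₁
    constructor <;> rw [eq_div_iff hd0]
    · linear_combination c₀ * h₁ - c₁ * h₀
    · linear_combination b₀ * h₁ - b₁ * h₀
  · rintro ⟨rfl, rfl⟩
    ext i
    fin_cases i <;>
      simp only [Fin.zero_eta, Fin.mk_one, Fin.isValue, cons_val_zero, cons_val_one,
        Pi.sub_apply, Pi.smul_apply, smul_eq_mul] <;>
      rw [div_mul_eq_mul_div, div_mul_eq_mul_div, div_sub_div_same, eq_div_iff hd0] <;> ring

theorem existsUnique_prod_of_forall_iff {α β : Type*} {P : α → β → Prop} {a : α} {b : β}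
    (h : ∀ x y, P x y ↔ x = a ∧ y = b) : ∃! p : α × β, P p.1 p.2 :=
  ⟨(a, b), (h a b).2 ⟨rfl, rfl⟩, fun _ hp => Prod.ext ((h _ _).1 hp).1 ((h _ _).1 hp).2⟩

noncomputable def diracMatrix (S : Matrix (Fin 2) (Fin 2) ℂ) (ω : ℂ) :
    Matrix (Fin 2) (Fin 2) ℂ :=
  Complex.I • σ3 * (S - ω • 1)

theorem diracMatrix_mulVec (S : Matrix (Fin 2) (Fin 2) ℂ) (ω : ℂ) (v : Fin 2 → ℂ) :
    diracMatrix S ω *ᵥ v = Complex.I • σ3 *ᵥ (S *ᵥ v - ω • v) := by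
  rw [diracMatrix, ← mulVec_mulVec, sub_mulVec, smul_mulVec, smul_mulVec, one_mulVec]

theorem eq_diracMatrix_mulVec {S : Matrix (Fin 2) (Fin 2) ℂ} {ω : ℂ} {d u : Fin 2 → ℂ}
    (h : Complex.I • σ3 *ᵥ d + S *ᵥ u = ω • u) : d = diracMatrix S ω *ᵥ u := by
  have hσ3 : σ3 * σ3 = 1 := by simp [σ3, ← Matrix.ext_iff, Fin.forall_fin_two]
  calc d = σ3 *ᵥ σ3 *ᵥ d := by rw [mulVec_mulVec, hσ3, one_mulVec]
    _ = Complex.I • σ3 *ᵥ -(Complex.I • σ3 *ᵥ d) := by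
        rw [mulVec_neg, mulVec_smul, smul_neg, smul_smul, Complex.I_mul_I, neg_one_smul, neg_neg]
    _ = diracMatrix S ω *ᵥ u := by
        rw [diracMatrix_mulVec, eq_sub_of_add_eq h, neg_sub]

theorem diracMatrix_σ1_mulVec {ω k : ℂ} (hω : ω ^ 2 = 1 + k ^ 2) :
    diracMatrix σ1 ω *ᵥ ![1, ω - k] = (-(Complex.I * k)) • ![1, ω - k] := by
  rw [diracMatrix_mulVec]
  ext i
  fin_cases i <;>
    simp only [Fin.zero_eta, Fin.mk_one, σ1, σ3, mulVec, dotProduct, Fin.sum_univ_two,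
      of_apply, cons_val', cons_val_zero, cons_val_one, Fin.isValue, Pi.smul_apply, Pi.sub_apply,
      smul_eq_mul, cons_val_fin_one]
  · ring
  · linear_combination Complex.I * hω

theorem diracMatrix_σstar_mulVec (τ : ℝ) {ω k : ℂ} (hω : ω ^ 2 = 1 + k ^ 2) :
    diracMatrix (σstar τ) ω *ᵥ ![Complex.exp (-(Complex.I * τ)), ω + k]
      = (Complex.I * k) • ![Complex.exp (-(Complex.I * τ)), ω + k] := by
  have hE : Complex.exp (Complex.I * τ) * Complex.exp (-(Complex.I * τ)) = 1 := by
    rw [← Complex.exp_add, add_neg_cancel, Complex.exp_zero]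
  rw [diracMatrix_mulVec]
  ext i
  fin_cases i <;>
    simp only [Fin.zero_eta, Fin.mk_one, σstar, σ3, mulVec, dotProduct, Fin.sum_univ_two,
      of_apply, cons_val', cons_val_zero, cons_val_one, Fin.isValue, Pi.smul_apply, Pi.sub_apply,
      smul_eq_mul, cons_val_fin_one]
  · ring
  · linear_combination Complex.I * hω - Complex.I * hE

noncomputable def diracSolutions (τ : ℝ) (ω : ℂ) : Submodule ℂ (ℝ → Fin 2 → ℂ) :=
  piecewiseSolutions (diracMatrix σ1 ω) (diracMatrix (σstar τ) ω)

theorem ωk_neg (k : ℝ) : ωk (-k) = ωk k := by simp [ωk]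

theorem ωk_sq (k : ℝ) : ((ωk k : ℝ) : ℂ) ^ 2 = 1 + (k : ℂ) ^ 2 := by
  rw [ωk, ← Complex.ofReal_pow, Real.sq_sqrt (by positivity)]
  push_cast
  ring

noncomputable def jostPhi (τ k : ℝ) : ℂ :=
  k * (Complex.exp (-(Complex.I * τ)) + 1) - (ωk k : ℂ) * (Complex.exp (-(Complex.I * τ)) - 1)

theorem jostPhi_ne_zero (τ : ℝ) {k : ℝ} (hk : k ≠ 0) : jostPhi τ k ≠ 0 := by
  have hω : 0 < ωk k := Real.sqrt_pos.mpr (by positivity)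
  have hE : ‖Complex.exp (-(Complex.I * τ))‖ = 1 := by
    rw [show -(Complex.I * τ) = ((-τ : ℝ) : ℂ) * Complex.I by push_cast; ring]
    exact Complex.norm_exp_ofReal_mul_I _
  intro hφ
  rw [jostPhi] at hφ
  have hnorm : ‖Complex.exp (-(Complex.I * τ)) * ((ωk k - k : ℝ) : ℂ)‖
      = ‖((ωk k + k : ℝ) : ℂ)‖ := by
    congr 1
    push_cast
    linear_combination -hφ
  rw [norm_mul, hE, one_mul, Complex.norm_real, Complex.norm_real, Real.norm_eq_abs,
    Real.norm_eq_abs] at hnorm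
  rcases abs_eq_abs.mp hnorm.symm with h | h <;> [exact hk (by linarith); linarith]

section Jost

variable {τ k : ℝ} {ξ ξr ξl : ℝ → Fin 2 → ℂ} {T R : ℂ}

theorem IsRightJost.mem_diracSolutions (h : IsRightJost τ k ξ) :
    ξ ∈ diracSolutions τ (ωk k) := by
  refine ⟨h.1, fun x hx => ?_, fun x hx => ?_⟩
  · exact (h.2.1 x hx).hasDerivAt.congr_deriv (eq_diracMatrix_mulVec (h.2.2.2 x hx))
  · refine hasDerivAt_mulVec_of_eventuallyEq_exp_smul
      (diracMatrix_σstar_mulVec τ (ωk_sq k)) ?_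
    filter_upwards [Ioi_mem_nhds hx] with y hy using h.2.2.1 y hy.le

theorem IsLeftJost.mem_diracSolutions (h : IsLeftJost τ k ξ) :
    ξ ∈ diracSolutions τ (ωk k) := by
  refine ⟨h.1, fun x hx => ?_, fun x hx => ?_⟩
  · refine hasDerivAt_mulVec_of_eventuallyEq_exp_smul (diracMatrix_σ1_mulVec (ωk_sq k)) ?_
    filter_upwards [Iio_mem_nhds hx] with y hy
    rw [neg_mul]
    exact h.2.2.1 y hy.le
  · exact (h.2.1 x hx).hasDerivAt.congr_deriv (eq_diracMatrix_mulVec (h.2.2.2 x hx))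

theorem IsRightJost.apply_zero (h : IsRightJost τ k ξ) :
    ξ 0 = ![Complex.exp (-(Complex.I * τ)), ((ωk k : ℝ) : ℂ) + k] := by
  simpa using h.2.2.1 0 le_rfl

theorem IsLeftJost.apply_zero (h : IsLeftJost τ k ξ) :
    ξ 0 = ![1, ((ωk k : ℝ) : ℂ) - k] := by
  simpa using h.2.2.1 0 le_rfl

theorem IsRightJost.forall_eq_smul_sub_smul_iff (h : IsRightJost τ (-k) ξ) (hk : k ≠ 0)
    (hr : IsRightJost τ k ξr) (hl : IsLeftJost τ k ξl) :
    (∀ x, ξ x = T • ξl x - R • ξr x) ↔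
      T = 2 * Complex.exp (-(Complex.I * τ)) * k / jostPhi τ k ∧
        R = (Complex.exp (-(Complex.I * τ)) - 1) * ((ωk k : ℂ) - k) / jostPhi τ k := by
  have hmem := h.mem_diracSolutions
  rw [ωk_neg] at hmem
  rw [piecewiseSolutions.forall_eq_smul_sub_smul_iff hmem hl.mem_diracSolutions
    hr.mem_diracSolutions, h.apply_zero, hl.apply_zero, hr.apply_zero, ωk_neg,
    vec2_eq_smul_sub_smul_iff (by rw [jostPhi]; ring) (jostPhi_ne_zero τ hk)]
  push_cast
  constructor <;> rintro ⟨rfl, rfl⟩ <;> constructor <;> ring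

theorem IsLeftJost.forall_eq_smul_sub_smul_iff (h : IsLeftJost τ (-k) ξ) (hk : k ≠ 0)
    (hr : IsRightJost τ k ξr) (hl : IsLeftJost τ k ξl) :
    (∀ x, ξ x = T • ξr x - R • ξl x) ↔
      T = 2 * k / jostPhi τ k ∧
        R = (Complex.exp (-(Complex.I * τ)) - 1) * ((ωk k : ℂ) + k) / jostPhi τ k := by
  have hmem := h.mem_diracSolutions
  rw [ωk_neg] at hmem
  rw [piecewiseSolutions.forall_eq_smul_sub_smul_iff hmem hr.mem_diracSolutions
    hl.mem_diracSolutions, h.apply_zero, hl.apply_zero, hr.apply_zero, ωk_neg,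
    vec2_eq_smul_sub_smul_iff (d := -jostPhi τ k) (by rw [jostPhi]; ring)
    (neg_ne_zero.mpr (jostPhi_ne_zero τ hk))]
  push_cast
  constructor <;> rintro ⟨rfl, rfl⟩ <;> constructor <;> ring

end Jost

theorem stmt11 (τ k : ℝ) (hk : k ≠ 0)
    (ξpk ξmk ξpmk ξmmk : ℝ → Fin 2 → ℂ)
    (h1 : IsRightJost τ k ξpk) (h2 : IsLeftJost τ k ξmk)
    (h3 : IsRightJost τ (-k) ξpmk) (h4 : IsLeftJost τ (-k) ξmmk) :
    let φ : ℂ := (k : ℂ) * (Complex.exp (-(Complex.I * τ)) + 1)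
        - ((Real.sqrt (1 + k ^ 2) : ℝ) : ℂ) * (Complex.exp (-(Complex.I * τ)) - 1)
    φ ≠ 0 ∧
    (∃! TR : ℂ × ℂ, ∀ x : ℝ, ξpmk x = TR.1 • ξmk x - TR.2 • ξpk x) ∧
    (∀ T₁ R₁ : ℂ, (∀ x : ℝ, ξpmk x = T₁ • ξmk x - R₁ • ξpk x) →
      T₁ = 2 * Complex.exp (-(Complex.I * τ)) * k / φ) ∧
    (∃! TR : ℂ × ℂ, ∀ x : ℝ, ξmmk x = TR.1 • ξpk x - TR.2 • ξmk x) ∧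
    (∀ T₂ R₂ : ℂ, (∀ x : ℝ, ξmmk x = T₂ • ξpk x - R₂ • ξmk x) →
      T₂ = 2 * k / φ) ∧
    2 * Complex.exp (-(Complex.I * τ)) * k / φ
      = Complex.exp (-(Complex.I * τ)) * (2 * k / φ) := by
  intro φ
  have hcoeff₁ := fun T R => h3.forall_eq_smul_sub_smul_iff (T := T) (R := R) hk h1 h2
  have hcoeff₂ := fun T R => h4.forall_eq_smul_sub_smul_iff (T := T) (R := R) hk h1 h2
  exact ⟨jostPhi_ne_zero τ hk, existsUnique_prod_of_forall_iff hcoeff₁,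
    fun T R h => ((hcoeff₁ T R).1 h).1, existsUnique_prod_of_forall_iff hcoeff₂,
    fun T R h => ((hcoeff₂ T R).1 h).1, by ring⟩
end

section
/- For all real numbers k and τ: |k(e^(-iτ)+1) - √(1+k²)(e^(-iτ)-1)|² = 4(k² + sin²(τ/2)). Consequently, for k ≠ 0, the transmission coefficient T(k,τ) := 2k/(k(e^(iτ)+1) + √(1+k²)(e^(iτ)-1)) is well defined (the denominator is nonzero) and satisfies |T(k,τ)|² = k²/(k² + sin²(τ/2)). -/
open Complex

/-!
For a unit complex number `z`, the vectors `z + 1` and `z - 1` are orthogonal in `ℂ ≅ ℝ²`, so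
`‖a (z + 1) + b (z - 1)‖² = a² ‖z + 1‖² + b² ‖z - 1‖²`. When `b² = 1 + a²`, the parallelogram law
`‖z + 1‖² + ‖z - 1‖² = 4` turns this into `4 a² + ‖z - 1‖²`, and `‖e^{iθ} - 1‖ = 2 |sin (θ / 2)|`.
Both expressions of the theorem have this shape (`b = ∓√(1 + k²)`, `θ = ∓τ`), so the denominator
of `T` has squared modulus `4 (k² + sin² (τ / 2)) > 0` when `k ≠ 0`.
-/

namespace Complex

theorem norm_sq_ofReal_mul_add_one_add_ofReal_mul_sub_one {z : ℂ} (hz : ‖z‖ = 1) (a b : ℝ) :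
    ‖(a : ℂ) * (z + 1) + b * (z - 1)‖ ^ 2 = a ^ 2 * ‖z + 1‖ ^ 2 + b ^ 2 * ‖z - 1‖ ^ 2 := by
  have horth : inner ℝ (z + 1) (z - 1) = 0 := by
    rw [real_inner_add_sub_eq_zero_iff, hz, norm_one]
  have := norm_add_sq_eq_norm_sq_add_norm_sq_real
    (x := a • (z + 1)) (y := b • (z - 1)) (by
      rw [real_inner_smul_left, real_inner_smul_right, horth, mul_zero, mul_zero])
  simpa only [← sq, real_smul, norm_mul, norm_real, Real.norm_eq_abs, mul_pow, sq_abs] using this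

theorem norm_sq_ofReal_mul_add_one_add_ofReal_mul_sub_one_of_sq_eq {z : ℂ} (hz : ‖z‖ = 1) {a b : ℝ}
    (hb : b ^ 2 = 1 + a ^ 2) :
    ‖(a : ℂ) * (z + 1) + b * (z - 1)‖ ^ 2 = 4 * a ^ 2 + ‖z - 1‖ ^ 2 := by
  have hpar := parallelogram_law_with_norm ℝ z 1
  rw [hz, norm_one] at hpar
  rw [norm_sq_ofReal_mul_add_one_add_ofReal_mul_sub_one hz, hb]
  linear_combination a ^ 2 * hpar

theorem norm_sq_exp_I_mul_ofReal_sub_one (θ : ℝ) :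
    ‖exp (I * θ) - 1‖ ^ 2 = 4 * Real.sin (θ / 2) ^ 2 := by
  rw [norm_exp_I_mul_ofReal_sub_one, Real.norm_eq_abs, sq_abs]
  ring

theorem norm_sq_ofReal_mul_exp_I_mul_add_one_add_ofReal_mul_sub_one (θ : ℝ) {a b : ℝ}
    (hb : b ^ 2 = 1 + a ^ 2) :
    ‖(a : ℂ) * (exp (I * θ) + 1) + b * (exp (I * θ) - 1)‖ ^ 2
      = 4 * (a ^ 2 + Real.sin (θ / 2) ^ 2) := by
  rw [norm_sq_ofReal_mul_add_one_add_ofReal_mul_sub_one_of_sq_eq (norm_exp_I_mul_ofReal θ) hb,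
    norm_sq_exp_I_mul_ofReal_sub_one]
  ring

end Complex

theorem stmt12 (k τ : ℝ) :
    ‖((k : ℂ) * (Complex.exp (-(Complex.I * τ)) + 1)
        - ((Real.sqrt (1 + k ^ 2) : ℝ) : ℂ) * (Complex.exp (-(Complex.I * τ)) - 1))‖ ^ 2
      = 4 * (k ^ 2 + Real.sin (τ / 2) ^ 2) ∧
    (k ≠ 0 →
      ((k : ℂ) * (Complex.exp (Complex.I * τ) + 1)
          + ((Real.sqrt (1 + k ^ 2) : ℝ) : ℂ) * (Complex.exp (Complex.I * τ) - 1)) ≠ 0 ∧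
      ‖((2 * (k : ℂ)) /
          ((k : ℂ) * (Complex.exp (Complex.I * τ) + 1)
            + ((Real.sqrt (1 + k ^ 2) : ℝ) : ℂ) * (Complex.exp (Complex.I * τ) - 1)))‖ ^ 2
        = k ^ 2 / (k ^ 2 + Real.sin (τ / 2) ^ 2)) := by
  have hs : √(1 + k ^ 2) ^ 2 = 1 + k ^ 2 := Real.sq_sqrt (by positivity)
  have hD := norm_sq_ofReal_mul_exp_I_mul_add_one_add_ofReal_mul_sub_one τ hs
  refine ⟨?_, fun hk => ?_⟩
  · have h := norm_sq_ofReal_mul_exp_I_mul_add_one_add_ofReal_mul_sub_one (-τ)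
      (a := k) (b := -√(1 + k ^ 2)) (by rw [neg_sq, hs])
    rwa [neg_div, Real.sin_neg, neg_sq, ofReal_neg, ofReal_neg, mul_neg, neg_mul,
      ← sub_eq_add_neg] at h
  · have hpos : 0 < k ^ 2 + Real.sin (τ / 2) ^ 2 := by positivity
    have hne : (k : ℂ) * (exp (I * τ) + 1) + (√(1 + k ^ 2) : ℂ) * (exp (I * τ) - 1) ≠ 0 := by
      intro h
      rw [h, norm_zero] at hD
      linarith
    refine ⟨hne, ?_⟩
    rw [norm_div, div_pow, hD, norm_mul, Complex.norm_two, norm_real, Real.norm_eq_abs, mul_pow,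
      sq_abs]
    field_simp
    ring
end

section
/- There exists a constant C > 0 such that for every integer j ≥ 1, every infinitely differentiable function ψ : ℝ → ℂ whose support is contained in [2^j, 2^(j+2)] ∪ [-2^(j+2), -2^j], every r ∈ ℝ, and every t ∈ ℝ with t ≠ 0, the oscillatory integral I = ∫_ℝ exp(i(k·r - t·√(1+k²)))·ψ(k) dk satisfies all three bounds: |I| ≤ C·∫_ℝ |ψ(k)| dk; |I| ≤ C·|t|^(-1/2)·2^(3j/2)·∫_ℝ |ψ'(k)| dk; and |I| ≤ C·|t|^(-3/2)·2^(3j/2)·∫_ℝ |h''(k) + i·r·h'(k)| dk, where h(k) = (√(1+k²)/k)·ψ(k) for k ≠ 0 and h(0) = 0 (h is smooth since the support of ψ is bounded away from 0). -/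
/-!
Van der Corput's lemma: if `L ≤ |φ''|` on `[a, b]` then `‖∫ₐᵇ e^{iφ}‖ ≤ 6 / √L`. Where `|φ'| ≥ √L`,
integrate by parts against `(e^{iφ})' / (iφ')`; as `φ'` is monotone, the boundary and error terms
add up to at most `2 / √L`. As `φ'` grows at rate `L`, the set where `|φ'| < √L` is an interval of
length at most `2 / √L`. Integrating by parts once more, against the primitive of `e^{iφ}`, gives
`‖∫ e^{iφ} g‖ ≤ 6 / √L · ∫ ‖g'‖` for `g` supported in `[a, b]`.

For the Klein–Gordon phase `φ k = k r - t √(1 + k²)`, `|φ''| = |t| (1 + k²)^{-3/2}` is at least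
`|t| 2^{-3j-12}` on `[-2^{j+3}, 2^{j+3}] ⊇ supp ψ`, which gives the second bound. For the third,
`ψ = h ω'` with `ω' k = k / √(1 + k²)` and `φ' = r - t ω'`, so integrating
`(e^{iφ} h)' = e^{iφ} (h' + i r h) - i t e^{iφ} ψ` over `ℝ` gives `i t I = ∫ e^{iφ} (h' + i r h)`,
to which the amplitude bound applies.
-/

open Complex MeasureTheory Set Function
open scoped ComplexConjugate

section VanDerCorput

variable {φ φ' φ'' : ℝ → ℝ} {a b δ L : ℝ}

theorem norm_integral_cexp_mul_le_integral_norm (φ : ℝ → ℝ) (f : ℝ → ℂ) :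
    ‖∫ x, cexp (I * φ x) * f x‖ ≤ ∫ x, ‖f x‖ :=
  (norm_integral_le_integral_norm _).trans_eq <| by
    simp_rw [norm_mul, norm_exp_I_mul_ofReal, one_mul]

theorem norm_integral_cexp_le_of_deriv_ne_zero (hab : a ≤ b)
    (hφ : ∀ x, HasDerivAt φ (φ' x) x) (hφ' : ∀ x, HasDerivAt φ' (φ'' x) x)
    (hφ'' : Continuous φ'') (hne : ∀ x ∈ Icc a b, φ' x ≠ 0) :
    ‖∫ x in a..b, cexp (I * φ x)‖ ≤
      |φ' a|⁻¹ + |φ' b|⁻¹ + ∫ x in a..b, |φ'' x| / φ' x ^ 2 := by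
  have hφc : Continuous φ := continuous_iff_continuousAt.2 fun x => (hφ x).continuousAt
  have hφ'c : Continuous φ' := continuous_iff_continuousAt.2 fun x => (hφ' x).continuousAt
  rw [← uIcc_of_le hab] at hne
  have hIne : ∀ x ∈ uIcc a b, I * (φ' x : ℂ) ≠ 0 := fun x hx =>
    mul_ne_zero I_ne_zero (ofReal_ne_zero.2 (hne x hx))
  set u : ℝ → ℂ := fun x => (I * φ' x)⁻¹
  set u' : ℝ → ℂ := fun x => -(I * φ'' x) / (I * φ' x) ^ 2
  set v : ℝ → ℂ := fun x => cexp (I * φ x)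
  have hu : ∀ x ∈ uIcc a b, HasDerivAt u (u' x) x := fun x hx =>
    (((hφ' x).ofReal_comp.const_mul I).inv (hIne x hx)).congr_deriv (by simp only [u'])
  have hv : ∀ x ∈ uIcc a b, HasDerivAt v (v x * (I * φ' x)) x := fun x _ =>
    ((hφ x).ofReal_comp.const_mul I).cexp
  have hu'c : ContinuousOn u' (uIcc a b) :=
    ContinuousOn.div (by fun_prop) (by fun_prop) fun x hx => pow_ne_zero 2 (hIne x hx)
  have hibp := intervalIntegral.integral_mul_deriv_eq_deriv_mul hu hv hu'c.intervalIntegrable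
    (by apply Continuous.intervalIntegrable; simp only [v]; fun_prop)
  have huv : ∫ x in a..b, u x * (v x * (I * φ' x)) = ∫ x in a..b, v x :=
    intervalIntegral.integral_congr fun x hx => by
      simp only [u]; rw [mul_left_comm, inv_mul_cancel₀ (hIne x hx), mul_one]
  have hnorm_u : ∀ x, ‖u x‖ = |φ' x|⁻¹ := fun x => by simp [u]
  have hnorm_u'v : ∀ x, ‖u' x * v x‖ = |φ'' x| / φ' x ^ 2 := fun x => by
    simp [u', v]
  rw [← huv, hibp]
  calc ‖u b * v b - u a * v a - ∫ x in a..b, u' x * v x‖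
      ≤ ‖u b * v b‖ + ‖u a * v a‖ + ‖∫ x in a..b, u' x * v x‖ :=
        (norm_sub_le _ _).trans (add_le_add_left (norm_sub_le _ _) _)
    _ ≤ |φ' b|⁻¹ + |φ' a|⁻¹ + ∫ x in a..b, |φ'' x| / φ' x ^ 2 := by
        simp only [norm_mul, hnorm_u, v, norm_exp_I_mul_ofReal, mul_one]
        gcongr
        exact (intervalIntegral.norm_integral_le_integral_norm hab).trans_eq
          (intervalIntegral.integral_congr fun x _ => hnorm_u'v x)
    _ = _ := by ring

theorem norm_integral_cexp_le_of_le_deriv (hab : a ≤ b) (hδ : 0 < δ)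
    (hφ : ∀ x, HasDerivAt φ (φ' x) x) (hφ' : ∀ x, HasDerivAt φ' (φ'' x) x)
    (hφ'' : Continuous φ'') (hconv : ∀ x ∈ Icc a b, 0 ≤ φ'' x)
    (hsgn : δ ≤ φ' a ∨ φ' b ≤ -δ) :
    ‖∫ x in a..b, cexp (I * φ x)‖ ≤ 2 / δ := by
  have hφ'c : Continuous φ' := continuous_iff_continuousAt.2 fun x => (hφ' x).continuousAt
  have hmono : MonotoneOn φ' (Icc a b) :=
    monotoneOn_of_hasDerivWithinAt_nonneg (convex_Icc a b) hφ'c.continuousOn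
      (fun x _ => (hφ' x).hasDerivWithinAt) fun x hx => hconv x (interior_subset hx)
  have hsgn' : (∀ x ∈ Icc a b, δ ≤ φ' x) ∨ ∀ x ∈ Icc a b, φ' x ≤ -δ := hsgn.imp
    (fun h x hx => h.trans (hmono (left_mem_Icc.2 hab) hx hx.1))
    (fun h x hx => (hmono hx (right_mem_Icc.2 hab) hx.2).trans h)
  have hne : ∀ x ∈ Icc a b, φ' x ≠ 0 := fun x hx => by
    rcases hsgn' with h | h <;> linarith [h x hx]
  have hftc : ∫ x in a..b, |φ'' x| / φ' x ^ 2 = (φ' a)⁻¹ - (φ' b)⁻¹ := by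
    rw [← uIcc_of_le hab] at hne hconv
    rw [intervalIntegral.integral_eq_sub_of_hasDerivAt (f := fun x => -(φ' x)⁻¹) (fun x hx =>
      ((hφ' x).inv (hne x hx)).neg.congr_deriv (by rw [abs_of_nonneg (hconv x hx)]; ring))]
    · ring
    · exact ContinuousOn.intervalIntegrable (by
        exact ContinuousOn.div (by fun_prop) (by fun_prop) fun x hx => pow_ne_zero 2 (hne x hx))
  refine (norm_integral_cexp_le_of_deriv_ne_zero hab hφ hφ' hφ'' hne).trans ?_
  rw [hftc]
  rcases hsgn' with h | h
  · have ha := h a (left_mem_Icc.2 hab)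
    have hb := h b (right_mem_Icc.2 hab)
    rw [abs_of_pos (by linarith), abs_of_pos (by linarith)]
    have : (φ' a)⁻¹ ≤ δ⁻¹ := inv_anti₀ hδ ha
    linarith [div_eq_mul_inv 2 δ]
  · have ha := h a (left_mem_Icc.2 hab)
    have hb := h b (right_mem_Icc.2 hab)
    rw [abs_of_neg (by linarith), abs_of_neg (by linarith), inv_neg, inv_neg]
    have : (-φ' b)⁻¹ ≤ δ⁻¹ := inv_anti₀ hδ (by linarith)
    rw [inv_neg] at this
    linarith [div_eq_mul_inv 2 δ]

theorem norm_integral_cexp_le_of_le_deriv2_of_neg_le_deriv (hab : a ≤ b) (hL : 0 < L)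
    (hφ : ∀ x, HasDerivAt φ (φ' x) x) (hφ' : ∀ x, HasDerivAt φ' (φ'' x) x)
    (hφ'' : Continuous φ'') (hLφ'' : ∀ x ∈ Icc a b, L ≤ φ'' x) (ha : -√L ≤ φ' a) :
    ‖∫ x in a..b, cexp (I * φ x)‖ ≤ 4 / √L := by
  set δ := √L with hδ_def
  have hδ : 0 < δ := Real.sqrt_pos.2 hL
  have hφ'c : Continuous φ' := continuous_iff_continuousAt.2 fun x => (hφ' x).continuousAt
  have hconv : ∀ x ∈ Icc a b, 0 ≤ φ'' x := fun x hx => hL.le.trans (hLφ'' x hx)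
  by_cases hA : δ ≤ φ' a
  · exact (norm_integral_cexp_le_of_le_deriv hab hδ hφ hφ' hφ'' hconv (.inl hA)).trans
      (by gcongr; norm_num)
  -- `|φ'| ≤ δ` on `[a, q]` and `δ ≤ φ'` on `[q, b]`
  obtain ⟨q, hq, hqδ, hIq⟩ : ∃ q ∈ Icc a b, φ' q ≤ δ ∧
      ‖∫ x in q..b, cexp (I * φ x)‖ ≤ 2 / δ := by
    by_cases hb : φ' b ≤ δ
    · exact ⟨b, right_mem_Icc.2 hab, hb, by simp; positivity⟩
    obtain ⟨q, hq, hqv⟩ := intermediate_value_Icc hab hφ'c.continuousOn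
      (⟨(not_le.1 hA).le, (not_le.1 hb).le⟩ : δ ∈ Icc (φ' a) (φ' b))
    exact ⟨q, hq, hqv.le, norm_integral_cexp_le_of_le_deriv hq.2 hδ hφ hφ' hφ''
      (fun x hx => hconv x ⟨hq.1.trans hx.1, hx.2⟩) (.inl hqv.ge)⟩
  have hlen : L * (q - a) ≤ φ' q - φ' a :=
    (convex_Icc a b).mul_sub_le_image_sub_of_le_deriv hφ'c.continuousOn
      (fun x _ => (hφ' x).differentiableAt.differentiableWithinAt)
      (fun x hx => (hφ' x).deriv ▸ hLφ'' x (interior_subset hx)) a (left_mem_Icc.2 hab) q hq hq.1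
  have hIaq : ‖∫ x in a..q, cexp (I * φ x)‖ ≤ 2 / δ :=
    calc ‖∫ x in a..q, cexp (I * φ x)‖ ≤ 1 * |q - a| :=
          intervalIntegral.norm_integral_le_of_norm_le_const fun x _ =>
            (norm_exp_I_mul_ofReal _).le
      _ ≤ 2 * δ / L := by
          rw [one_mul, abs_of_nonneg (sub_nonneg.2 hq.1), le_div_iff₀ hL]; linarith
      _ = 2 / δ := by rw [← Real.sq_sqrt hL.le, ← hδ_def]; field_simp
  have hφc : Continuous φ := continuous_iff_continuousAt.2 fun x => (hφ x).continuousAt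
  have hint : ∀ c d, IntervalIntegrable (fun x => cexp (I * φ x)) volume c d := fun c d =>
    Continuous.intervalIntegrable (by fun_prop) c d
  rw [← intervalIntegral.integral_add_adjacent_intervals (hint a q) (hint q b)]
  exact (norm_add_le_of_le hIaq hIq).trans_eq (by ring)

theorem norm_integral_cexp_le_of_le_deriv2 (hab : a ≤ b) (hL : 0 < L)
    (hφ : ∀ x, HasDerivAt φ (φ' x) x) (hφ' : ∀ x, HasDerivAt φ' (φ'' x) x)
    (hφ'' : Continuous φ'') (hLφ'' : ∀ x ∈ Icc a b, L ≤ φ'' x) :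
    ‖∫ x in a..b, cexp (I * φ x)‖ ≤ 6 / √L := by
  have hδ : 0 < √L := Real.sqrt_pos.2 hL
  have hφ'c : Continuous φ' := continuous_iff_continuousAt.2 fun x => (hφ' x).continuousAt
  have hconv : ∀ x ∈ Icc a b, 0 ≤ φ'' x := fun x hx => hL.le.trans (hLφ'' x hx)
  by_cases hB : φ' b ≤ -√L
  · exact (norm_integral_cexp_le_of_le_deriv hab hδ hφ hφ' hφ'' hconv (.inr hB)).trans
      (by gcongr; norm_num)
  -- `φ' ≤ -√L` on `[a, p]` and `-√L ≤ φ'` on `[p, b]`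
  obtain ⟨p, hp, hpδ, hIp⟩ : ∃ p ∈ Icc a b, -√L ≤ φ' p ∧
      ‖∫ x in a..p, cexp (I * φ x)‖ ≤ 2 / √L := by
    by_cases ha : -√L ≤ φ' a
    · exact ⟨a, left_mem_Icc.2 hab, ha, by simp; positivity⟩
    obtain ⟨p, hp, hpv⟩ := intermediate_value_Icc hab hφ'c.continuousOn
      (⟨(not_le.1 ha).le, (not_le.1 hB).le⟩ : -√L ∈ Icc (φ' a) (φ' b))
    exact ⟨p, hp, hpv.ge, norm_integral_cexp_le_of_le_deriv hp.1 hδ hφ hφ' hφ''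
      (fun x hx => hconv x ⟨hx.1, hx.2.trans hp.2⟩) (.inr hpv.le)⟩
  have hIpb := norm_integral_cexp_le_of_le_deriv2_of_neg_le_deriv hp.2 hL hφ hφ' hφ''
    (fun x hx => hLφ'' x ⟨hp.1.trans hx.1, hx.2⟩) hpδ
  have hφc : Continuous φ := continuous_iff_continuousAt.2 fun x => (hφ x).continuousAt
  have hint : ∀ c d, IntervalIntegrable (fun x => cexp (I * φ x)) volume c d := fun c d =>
    Continuous.intervalIntegrable (by fun_prop) c d
  rw [← intervalIntegral.integral_add_adjacent_intervals (hint a p) (hint p b)]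
  exact (norm_add_le_of_le hIp hIpb).trans_eq (by ring)

theorem IsPreconnected.forall_le_or_forall_le_neg_of_le_abs {f : ℝ → ℝ} {s : Set ℝ}
    (hs : IsPreconnected s) (hf : ContinuousOn f s) (hL : 0 < L)
    (hLf : ∀ x ∈ s, L ≤ |f x|) : (∀ x ∈ s, L ≤ f x) ∨ ∀ x ∈ s, f x ≤ -L := by
  by_contra hcon
  simp only [not_or, not_forall, not_le] at hcon
  obtain ⟨⟨x, hx, hfx⟩, ⟨y, hy, hfy⟩⟩ := hcon
  have hfx' : f x ≤ -L := by cases abs_cases (f x) <;> linarith [hLf x hx]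
  have hfy' : L ≤ f y := by cases abs_cases (f y) <;> linarith [hLf y hy]
  obtain ⟨z, hz, hfz⟩ := hs.intermediate_value hx hy hf
    (⟨by linarith, by linarith⟩ : (0 : ℝ) ∈ Icc (f x) (f y))
  have := hLf z hz
  rw [hfz, abs_zero] at this
  linarith

theorem norm_integral_cexp_le_of_le_abs_deriv2 (hab : a ≤ b) (hL : 0 < L)
    (hφ : ∀ x, HasDerivAt φ (φ' x) x) (hφ' : ∀ x, HasDerivAt φ' (φ'' x) x)
    (hφ'' : Continuous φ'') (hLφ'' : ∀ x ∈ Icc a b, L ≤ |φ'' x|) :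
    ‖∫ x in a..b, cexp (I * φ x)‖ ≤ 6 / √L := by
  rcases isPreconnected_Icc.forall_le_or_forall_le_neg_of_le_abs hφ''.continuousOn hL hLφ''
    with h | h
  · exact norm_integral_cexp_le_of_le_deriv2 hab hL hφ hφ' hφ'' h
  have hconj : ∫ x in a..b, cexp (I * φ x) =
      conj (∫ x in a..b, cexp (I * (-φ x : ℝ))) := by
    rw [← intervalIntegral.intervalIntegral_conj]
    refine intervalIntegral.integral_congr fun x _ => ?_
    rw [← exp_conj]
    simp
  rw [hconj, RCLike.norm_conj]
  exact norm_integral_cexp_le_of_le_deriv2 hab hL (fun x => (hφ x).neg) (fun x => (hφ' x).neg)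
    hφ''.neg fun x hx => by linarith [h x hx]

variable {g g' : ℝ → ℂ}

theorem norm_integral_cexp_mul_le (hab : a ≤ b) (hL : 0 < L)
    (hφ : ∀ x, HasDerivAt φ (φ' x) x) (hφ' : ∀ x, HasDerivAt φ' (φ'' x) x)
    (hφ'' : Continuous φ'') (hLφ'' : ∀ x ∈ Icc a b, L ≤ |φ'' x|)
    (hg : ∀ x, HasDerivAt g (g' x) x) (hg' : Continuous g') (hgb : g b = 0) :
    ‖∫ x in a..b, cexp (I * φ x) * g x‖ ≤ 6 / √L * ∫ x in a..b, ‖g' x‖ := by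
  have hφc : Continuous φ := continuous_iff_continuousAt.2 fun x => (hφ x).continuousAt
  have he : Continuous fun x => cexp (I * φ x) := by fun_prop
  set F : ℝ → ℂ := fun y => ∫ x in a..y, cexp (I * φ x)
  have hF : ∀ x, HasDerivAt F (cexp (I * φ x)) x := fun x =>
    (he.integral_hasStrictDerivAt a x).hasDerivAt
  have hFle : ∀ x ∈ Icc a b, ‖F x‖ ≤ 6 / √L := fun x hx =>
    norm_integral_cexp_le_of_le_abs_deriv2 hx.1 hL hφ hφ' hφ'' fun y hy =>
      hLφ'' y ⟨hy.1, hy.2.trans hx.2⟩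
  have hibp := intervalIntegral.integral_mul_deriv_eq_deriv_mul (fun x _ => hF x)
    (fun x _ => hg x) (he.intervalIntegrable a b) (hg'.intervalIntegrable a b)
  have hFg : ∫ x in a..b, cexp (I * φ x) * g x = -∫ x in a..b, F x * g' x := by
    simp [hibp, hgb, F]
  have hFc : Continuous F := continuous_iff_continuousAt.2 fun x => (hF x).continuousAt
  rw [hFg, norm_neg, ← intervalIntegral.integral_const_mul]
  refine (intervalIntegral.norm_integral_le_integral_norm hab).trans
    (intervalIntegral.integral_mono_on hab (by apply Continuous.intervalIntegrable; fun_prop)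
      (by apply Continuous.intervalIntegrable; fun_prop) fun x hx => ?_)
  rw [norm_mul]
  exact mul_le_mul_of_nonneg_right (hFle x hx) (norm_nonneg _)

theorem norm_integral_cexp_mul_le_of_support_subset (hab : a ≤ b) (hL : 0 < L)
    (hφ : ∀ x, HasDerivAt φ (φ' x) x) (hφ' : ∀ x, HasDerivAt φ' (φ'' x) x)
    (hφ'' : Continuous φ'') (hLφ'' : ∀ x ∈ Icc a b, L ≤ |φ'' x|)
    (hg : ∀ x, HasDerivAt g (g' x) x) (hg' : Continuous g') (hsupp : support g ⊆ Icc a b) :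
    ‖∫ x, cexp (I * φ x) * g x‖ ≤ 6 / √L * ∫ x, ‖g' x‖ := by
  have hgc : Continuous g := continuous_iff_continuousAt.2 fun x => (hg x).continuousAt
  -- an open set inside `[a, b]` lies in `(a, b)`, so `g` vanishes at both endpoints
  have hsupp' : support g ⊆ Ioo a b := by
    rw [← interior_Icc]; exact hgc.isOpen_support.subset_interior_iff.2 hsupp
  have hgb : g b = 0 := notMem_support.1 fun h => (hsupp' h).2.false
  rw [← intervalIntegral.integral_eq_integral_of_support_subset
    ((support_mul_subset_right _ _).trans (hsupp'.trans Ioo_subset_Ioc_self))]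
  refine (norm_integral_cexp_mul_le hab hL hφ hφ' hφ'' hLφ'' hg hg' hgb).trans ?_
  have hcs : HasCompactSupport g' := by
    rw [show g' = deriv g from funext fun x => (hg x).deriv.symm]
    exact (HasCompactSupport.intro isCompact_Icc fun x hx =>
      notMem_support.1 fun h => hx (hsupp h)).deriv
  gcongr
  rw [intervalIntegral.integral_of_le hab]
  exact setIntegral_le_integral (hg'.integrable_of_hasCompactSupport hcs).norm
    (.of_forall fun x => norm_nonneg _)

theorem integral_cexp_mul_deriv_add_eq_zero {u : ℝ → ℂ} (hφ : ∀ x, HasDerivAt φ (φ' x) x)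
    (hφ'c : Continuous φ') (hu : ContDiff ℝ 1 u) (hcs : HasCompactSupport u) :
    ∫ x, cexp (I * φ x) * (deriv u x + I * φ' x * u x) = 0 := by
  have hφc : Continuous φ := continuous_iff_continuousAt.2 fun x => (hφ x).continuousAt
  have he : Continuous fun x => cexp (I * φ x) := by fun_prop
  have hu' : Continuous (deriv u) := hu.continuous_deriv le_rfl
  refine integral_eq_zero_of_hasDerivAt_of_integrable (f := fun x => cexp (I * φ x) * u x)
    (fun x => (((hφ x).ofReal_comp.const_mul I).cexp.mul
      (hu.differentiable one_ne_zero x).hasDerivAt).congr_deriv (by ring)) ?_ ?_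
  · exact (he.mul (hu'.add ((by fun_prop : Continuous fun x => I * φ' x).mul hu.continuous)))
      |>.integrable_of_hasCompactSupport (hcs.deriv.add hcs.mul_left).mul_left
  · exact (he.mul hu.continuous).integrable_of_hasCompactSupport hcs.mul_left

end VanDerCorput

section KleinGordon

variable {r t R : ℝ}

noncomputable def kleinGordonPhase (r t k : ℝ) : ℝ := k * r - t * √(1 + k ^ 2)

theorem hasDerivAt_sqrt_one_add_sq (k : ℝ) :
    HasDerivAt (fun x => √(1 + x ^ 2)) (k / √(1 + k ^ 2)) k := by
  have hpos : 0 < √(1 + k ^ 2) := by positivity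
  refine ((hasDerivAt_pow 2 k).const_add 1).sqrt (by positivity) |>.congr_deriv ?_
  field_simp
  ring

theorem hasDerivAt_div_sqrt_one_add_sq (k : ℝ) :
    HasDerivAt (fun x => x / √(1 + x ^ 2)) (√(1 + k ^ 2) ^ 3)⁻¹ k := by
  have hpos : 0 < √(1 + k ^ 2) := by positivity
  have hsq : √(1 + k ^ 2) ^ 2 = 1 + k ^ 2 := Real.sq_sqrt (by positivity)
  refine ((hasDerivAt_id k).div (hasDerivAt_sqrt_one_add_sq k) hpos.ne').congr_deriv ?_
  field_simp
  rw [hsq, id]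
  ring

theorem hasDerivAt_kleinGordonPhase (k : ℝ) :
    HasDerivAt (kleinGordonPhase r t) (r - t * (k / √(1 + k ^ 2))) k :=
  (((hasDerivAt_id k).mul_const r).sub
    ((hasDerivAt_sqrt_one_add_sq k).const_mul t)).congr_deriv (by ring)

theorem hasDerivAt_deriv_kleinGordonPhase (k : ℝ) :
    HasDerivAt (fun x => r - t * (x / √(1 + x ^ 2))) (-t * (√(1 + k ^ 2) ^ 3)⁻¹) k := by
  simpa using ((hasDerivAt_div_sqrt_one_add_sq k).const_mul t).const_sub r

theorem abs_deriv2_kleinGordonPhase_ge (hR : 1 ≤ R) {k : ℝ} (hk : k ∈ Icc (-R) R) :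
    |t| / (2 * R) ^ 3 ≤ |-t * (√(1 + k ^ 2) ^ 3)⁻¹| := by
  have hsqrt : √(1 + k ^ 2) ≤ 2 * R := Real.sqrt_le_iff.2
    ⟨by linarith, by nlinarith [sq_le_sq' hk.1 hk.2]⟩
  rw [abs_mul, abs_neg, abs_inv, abs_pow, abs_of_pos (by positivity : 0 < √(1 + k ^ 2)),
    ← div_eq_mul_inv]
  gcongr

variable {g g' h : ℝ → ℂ}

theorem norm_integral_cexp_kleinGordonPhase_mul_le (hR : 1 ≤ R) (ht : t ≠ 0)
    (hg : ∀ x, HasDerivAt g (g' x) x) (hg' : Continuous g') (hsupp : support g ⊆ Icc (-R) R) :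
    ‖∫ k, cexp (I * kleinGordonPhase r t k) * g k‖ ≤
      6 / √(|t| / (2 * R) ^ 3) * ∫ k, ‖g' k‖ :=
  norm_integral_cexp_mul_le_of_support_subset (by linarith) (by positivity)
    hasDerivAt_kleinGordonPhase hasDerivAt_deriv_kleinGordonPhase
    (continuous_const.mul ((by fun_prop : Continuous fun k : ℝ => √(1 + k ^ 2) ^ 3).inv₀
      fun k => by positivity))
    (fun _ hk => abs_deriv2_kleinGordonPhase_ge hR hk) hg hg' hsupp

theorem integral_cexp_kleinGordonPhase_mul_eq (hh : ContDiff ℝ 1 h) (hcs : HasCompactSupport h) :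
    I * t * ∫ k, cexp (I * kleinGordonPhase r t k) * (h k * ((k / √(1 + k ^ 2) : ℝ) : ℂ)) =
      ∫ k, cexp (I * kleinGordonPhase r t k) * (deriv h k + I * r * h k) := by
  have he : Continuous fun k => cexp (I * kleinGordonPhase r t k) :=
    by unfold kleinGordonPhase; fun_prop
  have hw : Continuous fun k : ℝ => ((k / √(1 + k ^ 2) : ℝ) : ℂ) :=
    by fun_prop (disch := exact fun k => by positivity)
  have hzero := integral_cexp_mul_deriv_add_eq_zero
    (hasDerivAt_kleinGordonPhase (r := r) (t := t))
    (by fun_prop (disch := exact fun k => by positivity)) hh hcs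
  have hA : Integrable fun k => cexp (I * kleinGordonPhase r t k) * (deriv h k + I * r * h k) :=
    (he.mul ((hh.continuous_deriv le_rfl).add (continuous_const.mul hh.continuous)))
      |>.integrable_of_hasCompactSupport (hcs.deriv.add hcs.mul_left).mul_left
  have hB : Integrable fun k =>
      cexp (I * kleinGordonPhase r t k) * (h k * ((k / √(1 + k ^ 2) : ℝ) : ℂ)) :=
    (he.mul (hh.continuous.mul hw)).integrable_of_hasCompactSupport hcs.mul_right.mul_left
  rw [← integral_const_mul, eq_comm, ← sub_eq_zero, ← integral_sub hA (hB.const_mul _),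
    ← hzero]
  refine integral_congr_ae (.of_forall fun k => ?_)
  push_cast
  ring

theorem norm_integral_cexp_kleinGordonPhase_mul_le_deriv2 (hR : 1 ≤ R) (ht : t ≠ 0)
    (hh : ContDiff ℝ 2 h) (hsupp : support h ⊆ Icc (-R) R) :
    ‖∫ k, cexp (I * kleinGordonPhase r t k) * (h k * ((k / √(1 + k ^ 2) : ℝ) : ℂ))‖ ≤
      |t|⁻¹ * (6 / √(|t| / (2 * R) ^ 3)) *
        ∫ k, ‖deriv (deriv h) k + I * r * deriv h k‖ := by
  have hcs : HasCompactSupport h :=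
    .intro isCompact_Icc fun x hx => notMem_support.1 fun h' => hx (hsupp h')
  have hh' : ContDiff ℝ 1 (deriv h) := hh.deriv'
  have hg : ∀ k, HasDerivAt (fun k => deriv h k + I * r * h k)
      (deriv (deriv h) k + I * r * deriv h k) k := fun k =>
    (hh'.differentiable one_ne_zero k).hasDerivAt.add
      ((hh.differentiable two_ne_zero k).hasDerivAt.const_mul _)
  have hg' : Continuous fun k => deriv (deriv h) k + I * r * deriv h k :=
    (hh'.continuous_deriv le_rfl).add (continuous_const.mul hh'.continuous)
  have hsuppg : support (fun k => deriv h k + I * r * h k) ⊆ Icc (-R) R :=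
    (support_add _ _).trans (union_subset
      (support_deriv_subset.trans (closure_minimal hsupp isClosed_Icc))
      ((support_mul_subset_right _ _).trans hsupp))
  have hid := integral_cexp_kleinGordonPhase_mul_eq (r := r) (t := t) (hh.of_le one_le_two) hcs
  calc _ = |t|⁻¹ *
        ‖∫ k, cexp (I * kleinGordonPhase r t k) * (deriv h k + I * r * h k)‖ := by
        rw [← hid, norm_mul, norm_mul, norm_I, one_mul, norm_real, Real.norm_eq_abs,
          inv_mul_cancel_left₀ (abs_ne_zero.2 ht)]
    _ ≤ _ := by
        rw [mul_assoc]
        gcongr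
        exact norm_integral_cexp_kleinGordonPhase_mul_le hR ht hg hg' hsuppg

end KleinGordon

theorem six_div_sqrt_div_two_pow {T : ℝ} (hT : 0 < T) (j : ℕ) :
    6 / √(T / (2 * 2 ^ (j + 3)) ^ 3) = 384 * T ^ (-(1 : ℝ) / 2) * 2 ^ (3 * (j : ℝ) / 2) := by
  have h2 : ((2 : ℝ) * 2 ^ (j + 3)) ^ 3 = (2 ^ (3 * (j : ℝ) / 2) * 64) ^ 2 := by
    rw [mul_pow _ 64, ← Real.rpow_mul_natCast (by norm_num),
      show 3 * (j : ℝ) / 2 * (2 : ℕ) = (3 * j : ℕ) by push_cast; ring, Real.rpow_natCast]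
    ring
  rw [h2, Real.sqrt_div' _ (by positivity), Real.sqrt_sq (by positivity), Real.sqrt_eq_rpow,
    show -(1 : ℝ) / 2 = -(1 / 2) by ring, Real.rpow_neg hT.le]
  field_simp
  ring

theorem inv_mul_six_div_sqrt_div_two_pow {T : ℝ} (hT : 0 < T) (j : ℕ) :
    T⁻¹ * (6 / √(T / (2 * 2 ^ (j + 3)) ^ 3)) =
      384 * T ^ (-(3 : ℝ) / 2) * 2 ^ (3 * (j : ℝ) / 2) := by
  rw [six_div_sqrt_div_two_pow hT, show -(3 : ℝ) / 2 = -1 + -(1 : ℝ) / 2 by norm_num,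
    Real.rpow_add hT, Real.rpow_neg_one]
  ring

def dyadicShell (j : ℕ) : Set ℝ :=
  Icc ((2 : ℝ) ^ j) ((2 : ℝ) ^ (j + 2)) ∪ Icc (-(2 : ℝ) ^ (j + 2)) (-(2 : ℝ) ^ j)

theorem dyadicShell_subset_Icc (j : ℕ) : dyadicShell j ⊆ Icc (-2 ^ (j + 3)) (2 ^ (j + 3)) := by
  have h1 : (2 : ℝ) ^ (j + 2) ≤ 2 ^ (j + 3) := pow_le_pow_right₀ (by norm_num) (by omega)
  have h2 : (0 : ℝ) < 2 ^ j := by positivity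
  have h3 : (2 : ℝ) ^ j ≤ 2 ^ (j + 2) := pow_le_pow_right₀ (by norm_num) (by omega)
  rintro x (hx | hx) <;> constructor <;> linarith [hx.1, hx.2]

theorem eventuallyEq_zero_of_support_subset_dyadicShell {ψ : ℝ → ℂ} {j : ℕ}
    (hsupp : support ψ ⊆ dyadicShell j) : ψ =ᶠ[nhds 0] 0 := by
  have h : (1 : ℝ) ≤ 2 ^ j := one_le_pow₀ (by norm_num)
  filter_upwards [Ioo_mem_nhds (by norm_num : (-1 : ℝ) < 0) (by norm_num : (0 : ℝ) < 1)]
    with k hk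
  by_contra hψk
  rcases hsupp hψk with hk' | hk' <;> linarith [hk.1, hk.2, hk'.1, hk'.2]

-- `ψ / ω'` for the dispersion relation `ω k = √(1 + k²)`, set to `0` at the zero `k = 0` of `ω'`.
noncomputable def divGroupVelocity (ψ : ℝ → ℂ) (k : ℝ) : ℂ :=
  if k = 0 then 0 else ((√(1 + k ^ 2) / k : ℝ) : ℂ) * ψ k

section DivGroupVelocity

variable {ψ : ℝ → ℂ}

theorem contDiff_divGroupVelocity {n : WithTop ℕ∞} (hψ : ContDiff ℝ n ψ)
    (hψ0 : ψ =ᶠ[nhds 0] 0) : ContDiff ℝ n (divGroupVelocity ψ) := by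
  refine contDiff_iff_contDiffAt.2 fun x => ?_
  rcases eq_or_ne x 0 with rfl | hx
  · refine (contDiffAt_const (c := (0 : ℂ))).congr_of_eventuallyEq ?_
    filter_upwards [hψ0] with k hk
    simp [divGroupVelocity, hk]
  · have hf : ContDiffAt ℝ n (fun k : ℝ => ((√(1 + k ^ 2) / k : ℝ) : ℂ)) x :=
      ofRealCLM.contDiff.contDiffAt.comp x
        (((contDiff_const.add (contDiff_id.pow 2)).contDiffAt.sqrt (by positivity)).div
          contDiffAt_id hx)
    refine (hf.mul hψ.contDiffAt).congr_of_eventuallyEq ?_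
    filter_upwards [isOpen_ne.mem_nhds hx] with k hk
    simp [divGroupVelocity, hk]

theorem support_divGroupVelocity_subset : support (divGroupVelocity ψ) ⊆ support ψ :=
  fun k hk hψk => hk (by simp [divGroupVelocity, hψk])

theorem divGroupVelocity_mul (hψ0 : ψ 0 = 0) :
    ψ = fun k => divGroupVelocity ψ k * ((k / √(1 + k ^ 2) : ℝ) : ℂ) := funext fun k => by
  rcases eq_or_ne k 0 with rfl | hk
  · simp [divGroupVelocity, hψ0]
  · have : √(1 + k ^ 2) / k * (k / √(1 + k ^ 2)) = 1 := by field_simp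
    rw [divGroupVelocity, if_neg hk, mul_right_comm, ← ofReal_mul, this, ofReal_one, one_mul]

end DivGroupVelocity

theorem stmt16 :
    ∃ C : ℝ, 0 < C ∧
      ∀ j : ℕ, 1 ≤ j →
        ∀ ψ : ℝ → ℂ, ContDiff ℝ (⊤ : ℕ∞) ψ →
          Function.support ψ ⊆
            Set.Icc ((2 : ℝ) ^ j) ((2 : ℝ) ^ (j + 2)) ∪
              Set.Icc (-(2 : ℝ) ^ (j + 2)) (-(2 : ℝ) ^ j) →
          ∀ r t : ℝ, t ≠ 0 →
            let I : ℂ := ∫ k : ℝ,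
              Complex.exp (Complex.I * (k * r - t * Real.sqrt (1 + k ^ 2))) * ψ k
            let h : ℝ → ℂ := fun k =>
              if k = 0 then 0 else ((Real.sqrt (1 + k ^ 2) / k : ℝ) : ℂ) * ψ k
            (‖I‖ ≤ C * ∫ k : ℝ, ‖ψ k‖) ∧
            (‖I‖ ≤ C * |t| ^ (-(1 : ℝ) / 2) * (2 : ℝ) ^ ((3 * (j : ℝ)) / 2) *
              ∫ k : ℝ, ‖deriv ψ k‖) ∧
            (‖I‖ ≤ C * |t| ^ (-(3 : ℝ) / 2) * (2 : ℝ) ^ ((3 * (j : ℝ)) / 2) *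
              ∫ k : ℝ, ‖deriv (deriv h) k + Complex.I * r * deriv h k‖) := by
  refine ⟨384, by norm_num, fun j _ ψ hψ hsupp r t ht => ?_⟩
  intro J h
  have hJ : J = ∫ k, cexp (I * kleinGordonPhase r t k) * ψ k := by
    simp only [J, kleinGordonPhase]; push_cast; rfl
  have hR : (1 : ℝ) ≤ 2 ^ (j + 3) := one_le_pow₀ (by norm_num)
  have hψR := hsupp.trans (dyadicShell_subset_Icc j)
  have hψ0 := eventuallyEq_zero_of_support_subset_dyadicShell hsupp
  have hh : ContDiff ℝ 2 (divGroupVelocity ψ) :=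
    contDiff_divGroupVelocity (hψ.of_le (WithTop.coe_le_coe.2 le_top)) hψ0
  rw [hJ]
  refine ⟨(norm_integral_cexp_mul_le_integral_norm _ ψ).trans
    (le_mul_of_one_le_left (integral_nonneg fun _ => norm_nonneg _) (by norm_num)), ?_, ?_⟩
  · rw [← six_div_sqrt_div_two_pow (abs_pos.2 ht)]
    exact norm_integral_cexp_kleinGordonPhase_mul_le hR ht
      (fun k => (hψ.differentiable (by simp) k).hasDerivAt) (hψ.continuous_deriv (by simp)) hψR
  · rw [divGroupVelocity_mul hψ0.eq_of_nhds, ← inv_mul_six_div_sqrt_div_two_pow (abs_pos.2 ht)]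
    exact norm_integral_cexp_kleinGordonPhase_mul_le_deriv2 hR ht hh
      (support_divGroupVelocity_subset.trans hψR)
end

section
/- Fix τ ∈ ℝ and ω ∈ ℂ. Suppose α : ℝ → ℂ² is differentiable at every x ≠ 0 and satisfies i·σ₃·α'(x) + σ₁·α(x) = ω·α(x) for all x < 0 and i·σ₃·α'(x) + σ⋆(τ)·α(x) = ω·α(x) for all x > 0. Define β : ℝ → ℂ² by β(x) = σ₃·S(τ)·α(-x), i.e. β₁(x) = e^(iτ)·α₁(-x) and β₂(x) = -α₂(-x), where S(τ) = diag(e^(iτ), 1). Then β is differentiable at every x ≠ 0 and satisfies i·σ₃·β'(x) + σ₁·β(x) = -ω·β(x) for all x < 0 and i·σ₃·β'(x) + σ⋆(2π-τ)·β(x) = -ω·β(x) for all x > 0. -/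
open Complex Matrix

/-- `α ↦ σ₃ S α(-·)` with `S = diag(c, 1)`. -/
def reflect (c : ℂ) (α : ℝ → Fin 2 → ℂ) : ℝ → Fin 2 → ℂ :=
  fun x => ![c * α (-x) 0, -α (-x) 1]

theorem hasDerivAt_reflect (c : ℂ) {α : ℝ → Fin 2 → ℂ} {x : ℝ}
    (hα : DifferentiableAt ℝ α (-x)) :
    HasDerivAt (reflect c α) ![-c * deriv α (-x) 0, deriv α (-x) 1] x := by
  have hcomp : HasDerivAt (fun y => α (-y)) (-deriv α (-x)) x :=
    (hα.hasDerivAt.scomp x (hasDerivAt_neg x)).congr_deriv (by simp)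
  rw [hasDerivAt_pi] at hcomp ⊢
  intro i
  fin_cases i
  · simpa [reflect, mul_comm] using (hcomp 0).const_mul c
  · simpa [reflect] using (hcomp 1).fun_neg

theorem dirac_offDiag_iff (a b ω : ℂ) (u v : Fin 2 → ℂ) :
    I • σ3.mulVec v + !![0, a; b, 0].mulVec u = ω • u ↔
      I * v 0 + a * u 1 = ω * u 0 ∧ -(I * v 1) + b * u 0 = ω * u 1 := by
  simp [funext_iff, Fin.forall_fin_two, σ3, dotProduct, Fin.sum_univ_two]

theorem reflect_dirac {a b a' b' c ω : ℂ} (ha : a' = c * a) (hb : b' * c = b)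
    {α : ℝ → Fin 2 → ℂ} {x : ℝ} (hα : DifferentiableAt ℝ α (-x))
    (hsol : I • σ3.mulVec (deriv α (-x)) + !![0, a; b, 0].mulVec (α (-x)) = ω • α (-x)) :
    I • σ3.mulVec (deriv (reflect c α) x) + !![0, a'; b', 0].mulVec (reflect c α x) =
      (-ω) • reflect c α x := by
  rw [(hasDerivAt_reflect c hα).deriv]
  rw [dirac_offDiag_iff] at hsol ⊢
  obtain ⟨h0, h1⟩ := hsol
  constructor
  · simp only [reflect, Matrix.cons_val_zero, Matrix.cons_val_one]
    linear_combination (-c) * h0 - α (-x) 1 * ha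
  · simp only [reflect, Matrix.cons_val_zero, Matrix.cons_val_one]
    linear_combination h1 + α (-x) 0 * hb

theorem σstar_two_pi_sub (τ : ℝ) :
    σstar (2 * Real.pi - τ) = !![0, exp (I * τ); exp (-(I * τ)), 0] := by
  have h₁ : exp (-(I * ((2 * Real.pi - τ : ℝ) : ℂ))) = exp (I * τ) := by
    rw [← exp_periodic.sub_eq (I * τ)]; push_cast; ring_nf
  have h₂ : exp (I * ((2 * Real.pi - τ : ℝ) : ℂ)) = exp (-(I * τ)) := by
    rw [← exp_periodic (-(I * τ))]; push_cast; ring_nf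
  rw [σstar, h₁, h₂]

theorem stmt17 (τ : ℝ) (ω : ℂ) (α : ℝ → Fin 2 → ℂ)
    (hdiff : ∀ x : ℝ, x ≠ 0 → DifferentiableAt ℝ α x)
    (hleft : ∀ x : ℝ, x < 0 →
      Complex.I • σ3.mulVec (deriv α x) + σ1.mulVec (α x) = ω • α x)
    (hright : ∀ x : ℝ, 0 < x →
      Complex.I • σ3.mulVec (deriv α x) + (σstar τ).mulVec (α x) = ω • α x) :
    let β : ℝ → Fin 2 → ℂ := fun x =>
      ![Complex.exp (Complex.I * τ) * α (-x) 0, -α (-x) 1]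
    (∀ x : ℝ, x ≠ 0 → DifferentiableAt ℝ β x) ∧
    (∀ x : ℝ, x < 0 →
      Complex.I • σ3.mulVec (deriv β x) + σ1.mulVec (β x) = (-ω) • β x) ∧
    (∀ x : ℝ, 0 < x →
      Complex.I • σ3.mulVec (deriv β x) + (σstar (2 * Real.pi - τ)).mulVec (β x)
        = (-ω) • β x) := by
  show (∀ x : ℝ, x ≠ 0 → DifferentiableAt ℝ (reflect (exp (I * τ)) α) x) ∧ _ ∧ _
  have hdiff' : ∀ x : ℝ, x ≠ 0 → DifferentiableAt ℝ α (-x) := fun x hx =>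
    hdiff (-x) (neg_ne_zero.mpr hx)
  have hE : exp (I * τ) * exp (-(I * τ)) = 1 := by
    rw [← exp_add, add_neg_cancel, exp_zero]
  refine ⟨fun x hx => (hasDerivAt_reflect _ (hdiff' x hx)).differentiableAt,
    fun x hx => ?_, fun x hx => ?_⟩
  · exact reflect_dirac (a := exp (-(I * τ))) (b := exp (I * τ)) (a' := 1) (b' := 1)
      hE.symm (one_mul _) (hdiff' x hx.ne) (hright (-x) (neg_pos.mpr hx))
  · rw [σstar_two_pi_sub]
    exact reflect_dirac (a := 1) (b := 1) (mul_one _).symm (by rw [mul_comm, hE])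
      (hdiff' x hx.ne') (hleft (-x) (neg_neg_iff_pos.mpr hx))
end
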